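/- arXiv:math/0607482 — 8 statements merged into one kernel-verified Lean document; each statement's English description precedes it below -/
import Mathlib

section
/- PL⁺(I) contains no nonabelian free subgroup: there is no injective group homomorphism from the free group on two generators into PL⁺(I). -/
/-!
Brin–Squier. Let `F` be the set of common fixed points of the two generators. Each generator is
affine on finitely many pieces, so `F` is a finite union of intervals and has finitely many gaps
`(c, d)`. At a common fixed point, one-sided slopes multiply under composition; being a
homomorphism to an abelian group, the slope is `1` for every element `w` of the commutator
subgroup, so `w` is the identity near `c` and near `d`. As the group has no fixed point in
`(c, d)`, the supremum of an orbit there is `d`, so a conjugate `g w g⁻¹` moves only points to the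
right of those moved by `w`; then `⁅w, g w g⁻¹⁆` is the identity on `(c, d)`. It is not `1`:
commuting elements of a free group are powers of a common element, and nonzero powers of an
increasing map move the same points. Treating the gaps one after another yields a nontrivial
element of the kernel.
-/

open Filter
open scoped commutatorElement

/-- The commutator length of `g`. -/
noncomputable def commLength {G : Type*} [Group G] (g : G) : ℕ :=
  sInf {m : ℕ | ∃ a b : Fin m → G, g = (List.ofFn fun i => ⁅a i, b i⁆).prod}

/-- Stable commutator length. -/
noncomputable def scl {G : Type*} [Group G] (g : G) : ℝ :=
  Filter.liminf (fun n : ℕ => (commLength (g ^ n) : ℝ) / n) Filter.atTop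

/-- Homogeneous quasimorphism. -/
def IsHomQM {G : Type*} [Group G] (f : G → ℝ) : Prop :=
  (∀ (a : G) (n : ℤ), f (a ^ n) = n * f a) ∧
  BddAbove {d : ℝ | ∃ a b : G, d = |f a + f b - f (a * b)|}

noncomputable def defect {G : Type*} [Group G] (f : G → ℝ) : ℝ :=
  sSup {d : ℝ | ∃ a b : G, d = |f a + f b - f (a * b)|}

/-- Orientation-preserving piecewise-linear homeomorphism of [0,1]. -/
def IsPLplus (g : Equiv.Perm unitInterval) : Prop :=
  StrictMono (fun x : unitInterval => (g x : ℝ)) ∧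
  ∃ (k : ℕ) (x : Fin (k + 1) → ℝ), StrictMono x ∧ x 0 = 0 ∧ x (Fin.last k) = 1 ∧
    ∀ i : Fin k, ∃ a b : ℝ, ∀ t : unitInterval,
      x i.castSucc ≤ (t : ℝ) → (t : ℝ) ≤ x i.succ → (g t : ℝ) = a * (t : ℝ) + b

open Set Function Topology

local notation "I" => unitInterval

section Gaps

variable {α : Type*}

structure IsGap [LinearOrder α] (F : Set α) (c d : α) : Prop where
  left_mem : c ∈ F
  right_mem : d ∈ F
  lt : c < d
  disjoint : Disjoint (Ioo c d) F

section LinearOrder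

variable [LinearOrder α] {F : Set α} {c d : α}

lemma IsGap.right_unique {d' : α} (h : IsGap F c d) (h' : IsGap F c d') : d = d' := by
  by_contra hne
  rcases lt_or_gt_of_ne hne with hlt | hlt
  · exact h'.disjoint.ne_of_mem ⟨h.lt, hlt⟩ h.right_mem rfl
  · exact h.disjoint.ne_of_mem ⟨h'.lt, hlt⟩ h'.right_mem rfl

lemma IsGap.isGreatest [DenselyOrdered α] {T : Set α} (hT : T.OrdConnected) (hTF : T ⊆ F)
    (h : IsGap F c d) (hc : c ∈ T) : IsGreatest T c := by
  refine ⟨hc, fun t ht => not_lt.mp fun hct => ?_⟩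
  obtain ⟨z, hcz, hz⟩ := exists_between (lt_min hct h.lt)
  exact h.disjoint.ne_of_mem ⟨hcz, hz.trans_le (min_le_right _ _)⟩
    (hTF (hT.out hc ht ⟨hcz.le, hz.le.trans (min_le_left _ _)⟩)) rfl

lemma finite_setOf_isGap_iUnion [DenselyOrdered α] {ι : Type*} [Finite ι] {T : ι → Set α}
    (hT : ∀ i, (T i).OrdConnected) : {p : α × α | IsGap (⋃ i, T i) p.1 p.2}.Finite := by
  refine Finite.of_finite_image (f := Prod.fst) ?_ fun p hp q hq hpq => ?_
  · refine (finite_iUnion fun i => Set.Subsingleton.finite (s := {c | IsGreatest (T i) c})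
      fun _ ha _ hb => ha.unique hb).subset ?_
    rintro _ ⟨p, hp, rfl⟩
    obtain ⟨i, hi⟩ := mem_iUnion.mp hp.left_mem
    exact mem_iUnion.mpr ⟨i, IsGap.isGreatest (hT i) (subset_iUnion T i) hp hi⟩
  · exact Prod.ext hpq (IsGap.right_unique hp (hpq ▸ hq))

end LinearOrder

lemma exists_isGap_mem_Ioo [CompleteLinearOrder α] [TopologicalSpace α] [OrderTopology α]
    {F : Set α} (hF : IsClosed F) (hbot : ⊥ ∈ F) (htop : ⊤ ∈ F) {x : α} (hx : x ∉ F) :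
    ∃ c d, IsGap F c d ∧ x ∈ Ioo c d := by
  have hc : sSup (F ∩ Iic x) ∈ F ∩ Iic x := (hF.inter isClosed_Iic).sSup_mem ⟨⊥, hbot, bot_le⟩
  have hd : sInf (F ∩ Ici x) ∈ F ∩ Ici x := (hF.inter isClosed_Ici).sInf_mem ⟨⊤, htop, le_top⟩
  have hcx : sSup (F ∩ Iic x) < x := hc.2.lt_of_ne fun h => hx (h ▸ hc.1)
  have hxd : x < sInf (F ∩ Ici x) := hd.2.lt_of_ne' fun h => hx (h ▸ hd.1)
  refine ⟨_, _, ⟨hc.1, hd.1, hcx.trans hxd, disjoint_left.mpr fun z hz hzF => ?_⟩, hcx, hxd⟩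
  rcases le_total z x with hzx | hxz
  · exact (le_sSup (show z ∈ F ∩ Iic x from ⟨hzF, hzx⟩)).not_gt hz.1
  · exact (sInf_le (show z ∈ F ∩ Ici x from ⟨hzF, hxz⟩)).not_gt hz.2

end Gaps

section OrderAutomorphism

variable {α : Type*} [LinearOrder α] {f : Equiv.Perm α}

lemma zpow_apply_eq_self_iff_of_strictMono (hf : StrictMono f) {n : ℤ} (hn : n ≠ 0) {x : α} :
    (f ^ n) x = x ↔ f x = x := by
  have hpow : ((f ^ n.natAbs) x = x ↔ f x = x) := by
    rw [Equiv.Perm.coe_pow]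
    simpa using (Function.Commute.id_right (f := ⇑f)).iterate_pos_eq_iff_map_eq hf.monotone
      strictMono_id (x := x) (Int.natAbs_pos.mpr hn)
  rcases Int.natAbs_eq n with h | h <;> rw [h]
  · rwa [zpow_natCast]
  · rwa [zpow_neg, zpow_natCast, Equiv.Perm.inv_eq_iff_eq, eq_comm]

lemma apply_mem_Ioo_iff_of_strictMono (hf : StrictMono f) {c d : α} (hc : f c = c)
    (hd : f d = d) {x : α} : f x ∈ Ioo c d ↔ x ∈ Ioo c d := by
  simp only [mem_Ioo]
  rw [← hf.lt_iff_lt (a := c) (b := x), ← hf.lt_iff_lt (a := x) (b := d), hc, hd]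

lemma map_bot_of_strictMono [OrderBot α] (hf : StrictMono f) : f ⊥ = ⊥ :=
  (hf.orderIsoOfSurjective f f.surjective).map_bot

lemma map_top_of_strictMono [OrderTop α] (hf : StrictMono f) : f ⊤ = ⊤ :=
  (hf.orderIsoOfSurjective f f.surjective).map_top

variable [TopologicalSpace α] [OrderTopology α]

lemma continuous_of_strictMono (hf : StrictMono f) : Continuous f :=
  (hf.orderIsoOfSurjective f f.surjective).continuous

lemma tendsto_nhdsGT_of_strictMono (hf : StrictMono f) {e : α} (he : f e = e) :
    Tendsto f (𝓝[>] e) (𝓝[>] e) := by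
  have := (continuous_of_strictMono hf).continuousWithinAt.tendsto_nhdsWithin
    (x := e) (s := Ioi e) (t := Ioi e) fun x (hx : e < x) => (he ▸ hf hx : e < f x)
  rwa [he] at this

lemma tendsto_nhdsLT_of_strictMono (hf : StrictMono f) {e : α} (he : f e = e) :
    Tendsto f (𝓝[<] e) (𝓝[<] e) := by
  have := (continuous_of_strictMono hf).continuousWithinAt.tendsto_nhdsWithin
    (x := e) (s := Iio e) (t := Iio e) fun x (hx : x < e) => (he ▸ hf hx : f x < e)
  rwa [he] at this

end OrderAutomorphism

lemma Equiv.Perm.commutatorElement_apply_eq_self_of_disjointOn {α : Type*} {f g : Equiv.Perm α}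
    {U : Set α} (hf : ∀ x, f x ∈ U ↔ x ∈ U) (hg : ∀ x, g x ∈ U ↔ x ∈ U)
    (hfg : ∀ x ∈ U, f x = x ∨ g x = x) {x : α} (hx : x ∈ U) : ⁅f, g⁆ x = x := by
  have hcomm : Commute (f.subtypePerm hf) (g.subtypePerm hg) :=
    Equiv.Perm.Disjoint.commute fun y => (hfg y y.2).imp Subtype.ext Subtype.ext
  have hy : f⁻¹ (g⁻¹ x) ∈ U := by simpa using (hf _).mp ((hg _).mp (by simpa using hx))
  have := congrArg (fun σ => (σ ⟨_, hy⟩ : α)) hcomm.eq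
  simp only [Equiv.Perm.mul_apply, Equiv.Perm.subtypePerm_apply] at this
  simp only [commutatorElement_def, Equiv.Perm.mul_apply] at this ⊢
  rw [this]
  simp

section FreeGroup

theorem FreeGroup.eq_of_of_mul_of_eq {A : Type*} {a b : A}
    (h : of a * of b = of b * of a) : a = b := by
  classical
  exact (by simpa [toWord_mul] using congrArg toWord h : a = b ∧ b = a).1

theorem IsFreeGroup.isCyclic_of_isMulCommutative (H : Type*) [Group H] [IsFreeGroup H]
    [IsMulCommutative H] : IsCyclic H := by
  have : Subsingleton (Generators H) := ⟨fun a b => by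
    refine FreeGroup.eq_of_of_mul_of_eq ?_
    simpa using congrArg (toFreeGroup H) (isMulCommutative_iff.mp ‹_›
      ((toFreeGroup H).symm (.of a)) ((toFreeGroup H).symm (.of b)))⟩
  suffices IsCyclic (FreeGroup (Generators H)) from
    isCyclic_of_surjective (toFreeGroup H).symm (toFreeGroup H).symm.surjective
  rcases isEmpty_or_nonempty (Generators H) with _ | ⟨⟨a⟩⟩
  · infer_instance
  · have := uniqueOfSubsingleton a
    infer_instance

theorem FreeGroup.exists_mem_zpowers_of_commute {X : Type*} {u v : FreeGroup X}
    (h : Commute u v) : ∃ z, u ∈ Subgroup.zpowers z ∧ v ∈ Subgroup.zpowers z := by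
  let H := Subgroup.closure {u, v}
  have : IsMulCommutative H := Subgroup.isMulCommutative_closure (by
    simp only [mem_insert_iff, mem_singleton_iff]
    rintro _ (rfl | rfl) _ (rfl | rfl) <;> first | rfl | exact h.eq | exact h.eq.symm)
  obtain ⟨z, hz⟩ := (IsFreeGroup.isCyclic_of_isMulCommutative H).exists_generator
  have hmem : ∀ y (hy : y ∈ H), y ∈ Subgroup.zpowers (z : FreeGroup X) := fun y hy => by
    obtain ⟨k, hk⟩ := Subgroup.mem_zpowers_iff.mp (hz ⟨y, hy⟩)
    exact Subgroup.mem_zpowers_iff.mpr ⟨k, by simpa using congrArg Subtype.val hk⟩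
  exact ⟨z, hmem u (Subgroup.subset_closure (by simp)), hmem v (Subgroup.subset_closure (by simp))⟩

end FreeGroup

section Partition

variable {β : Type*} [LinearOrder β] {k : ℕ} {x : Fin (k + 1) → β} {y : β}

lemma Monotone.exists_castSucc_le_and_lt_succ (hx : Monotone x) (h0 : x 0 ≤ y)
    (h1 : y < x (Fin.last k)) : ∃ i : Fin k, x i.castSucc ≤ y ∧ y < x i.succ := by
  induction k with
  | zero => exact absurd h1 (not_lt.mpr h0)
  | succ k ih =>
    by_cases hy : y < x (Fin.last k).castSucc
    · obtain ⟨i, hi⟩ := ih (x := x ∘ Fin.castSucc) (hx.comp Fin.strictMono_castSucc.monotone) h0 hy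
      refine ⟨i.castSucc, ?_⟩
      rw [Fin.succ_castSucc]
      exact hi
    · exact ⟨Fin.last k, not_lt.mp hy, by rwa [Fin.succ_last]⟩

lemma Monotone.exists_castSucc_lt_and_le_succ (hx : Monotone x) (h0 : x 0 < y)
    (h1 : y ≤ x (Fin.last k)) : ∃ i : Fin k, x i.castSucc < y ∧ y ≤ x i.succ := by
  induction k with
  | zero => exact absurd h0 (not_lt.mpr h1)
  | succ k ih =>
    by_cases hy : x (Fin.succ 0) < y
    · obtain ⟨i, hi⟩ := ih (x := x ∘ Fin.succ) (hx.comp (Fin.strictMono_succ).monotone) hy h1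
      refine ⟨i.succ, ?_⟩
      rw [← Fin.succ_castSucc]
      exact hi
    · exact ⟨0, h0, not_lt.mp hy⟩

lemma Monotone.exists_castSucc_le_and_le_succ (hx : Monotone x) (hx01 : x 0 < x (Fin.last k))
    (h0 : x 0 ≤ y) (h1 : y ≤ x (Fin.last k)) : ∃ i : Fin k, x i.castSucc ≤ y ∧ y ≤ x i.succ := by
  rcases h1.lt_or_eq with h1 | rfl
  · obtain ⟨i, hi0, hi1⟩ := hx.exists_castSucc_le_and_lt_succ h0 h1
    exact ⟨i, hi0, hi1.le⟩
  · obtain ⟨i, hi0, hi1⟩ := hx.exists_castSucc_lt_and_le_succ hx01 le_rfl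
    exact ⟨i, hi0.le, hi1⟩

end Partition

lemma ordConnected_setOf_mul_add_eq_self (a b : ℝ) : {t : ℝ | a * t + b = t}.OrdConnected := by
  refine ⟨fun u (hu : a * u + b = u) v (hv : a * v + b = v) t ht => ?_⟩
  rcases ht.1.eq_or_lt with rfl | hut
  · exact hu
  have ha : a = 1 := by
    have : (a - 1) * (v - u) = 0 := by linear_combination hv - hu
    exact sub_eq_zero.mp ((mul_eq_zero.mp this).resolve_right
      (sub_ne_zero.mpr (hut.trans_le ht.2).ne'))
  simp only [mem_ofPred_eq, ha, one_mul] at hu ⊢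
  linarith

section Slope

variable {l : Filter I} {g g' : Equiv.Perm I} {e : I} {a a' : ℝ}

def HasSlope (l : Filter I) (g : Equiv.Perm I) (e : I) (a : ℝ) : Prop :=
  ∀ᶠ t in l, (g t : ℝ) - e = a * (t - e)

lemma HasSlope.unique [l.NeBot] (hl : ∀ᶠ t in l, t ≠ e) (h : HasSlope l g e a)
    (h' : HasSlope l g e a') : a = a' := by
  obtain ⟨t, hte, ht, ht'⟩ := (hl.and (h.and h')).exists
  exact mul_right_cancel₀ (sub_ne_zero.mpr (Subtype.coe_injective.ne hte)) (ht.symm.trans ht')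

lemma HasSlope.mul (h : HasSlope l g e a) (h' : HasSlope l g' e a') (hg' : Tendsto g' l l) :
    HasSlope l (g * g') e (a * a') := by
  filter_upwards [hg'.eventually h, h'] with t ht ht'
  rw [Equiv.Perm.mul_apply, ht, ht', mul_assoc]

lemma hasSlope_one : HasSlope l 1 e 1 := Eventually.of_forall fun t => by simp

end Slope

theorem eventually_apply_eq_self_of_mem_commutator {G : Type*} [Group G] (φ : G →* Equiv.Perm I)
    {l : Filter I} [l.NeBot] {e : I} (hl : ∀ᶠ t in l, t ≠ e)
    (hslope : ∀ g, ∃ a, HasSlope l (φ g) e a) (htendsto : ∀ g, Tendsto (φ g) l l)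
    {w : G} (hw : w ∈ commutator G) : ∀ᶠ t in l, φ w t = t := by
  choose σ hσ using hslope
  let slope : G →* ℝ :=
    { toFun := σ
      map_one' := (hσ 1).unique hl (by rw [map_one]; exact hasSlope_one)
      map_mul' := fun u v =>
        (hσ (u * v)).unique hl (by rw [map_mul]; exact (hσ u).mul (hσ v) (htendsto v)) }
  have hσw : σ w = 1 := by
    simpa [slope] using
      congrArg Units.val (Abelianization.commutator_subset_ker slope.toHomUnits hw)
  filter_upwards [hσ w] with t ht
  rw [hσw, one_mul, sub_left_inj] at ht
  exact Subtype.ext ht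

namespace IsPLplus

variable {g : Equiv.Perm I}

lemma strictMono (hg : IsPLplus g) : StrictMono g := fun _ _ h => Subtype.coe_lt_coe.mp (hg.1 h)

lemma exists_fixedPoints_eq_iUnion (hg : IsPLplus g) :
    ∃ (k : ℕ) (T : Fin k → Set I), (∀ i, (T i).OrdConnected) ∧ fixedPoints g = ⋃ i, T i := by
  obtain ⟨-, k, x, hx, hx0, hx1, hpiece⟩ := hg
  choose a b hab using hpiece
  refine ⟨k, fun i => Subtype.val ⁻¹' (Icc (x i.castSucc) (x i.succ) ∩ {t | a i * t + b i = t}),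
    fun i => (ordConnected_Icc.inter (ordConnected_setOf_mul_add_eq_self _ _)).preimage_mono
      (Subtype.mono_coe _), ?_⟩
  ext t
  simp only [mem_fixedPoints, IsFixedPt, mem_iUnion, mem_preimage, mem_inter_iff, mem_Icc,
    mem_ofPred_eq]
  constructor
  · intro ht
    obtain ⟨i, hi0, hi1⟩ := hx.monotone.exists_castSucc_le_and_le_succ
      (by rw [hx0, hx1]; exact zero_lt_one) (hx0 ▸ t.2.1) (hx1 ▸ t.2.2)
    exact ⟨i, ⟨hi0, hi1⟩, by rw [← hab i t hi0 hi1, ht]⟩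
  · rintro ⟨i, ⟨hi0, hi1⟩, h⟩
    exact Subtype.ext ((hab i t hi0 hi1).trans h)

lemma exists_hasSlope_nhdsGT (hg : IsPLplus g) {e : I} (hfix : g e = e) (he : e < 1) :
    ∃ a, HasSlope (𝓝[>] e) g e a := by
  obtain ⟨-, k, x, hx, hx0, hx1, hpiece⟩ := hg
  obtain ⟨i, hi0, hi1⟩ := hx.monotone.exists_castSucc_le_and_lt_succ (hx0 ▸ e.2.1)
    (hx1 ▸ (he : (e : ℝ) < 1))
  obtain ⟨a, b, hab⟩ := hpiece i
  have hbe : (e : ℝ) = a * e + b := by simpa [hfix] using hab e hi0 hi1.le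
  have hnear : ∀ᶠ t : I in 𝓝[>] e, (t : ℝ) < x i.succ :=
    nhdsWithin_le_nhds ((continuous_subtype_val.tendsto e).eventually (gt_mem_nhds hi1))
  refine ⟨a, ?_⟩
  filter_upwards [hnear, self_mem_nhdsWithin] with t ht hte
  rw [hab t (hi0.trans hte.le) ht.le]
  linear_combination -hbe

lemma exists_hasSlope_nhdsLT (hg : IsPLplus g) {e : I} (hfix : g e = e) (he : 0 < e) :
    ∃ a, HasSlope (𝓝[<] e) g e a := by
  obtain ⟨-, k, x, hx, hx0, hx1, hpiece⟩ := hg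
  obtain ⟨i, hi0, hi1⟩ := hx.monotone.exists_castSucc_lt_and_le_succ
    (hx0 ▸ (he : (0 : ℝ) < e)) (hx1 ▸ e.2.2)
  obtain ⟨a, b, hab⟩ := hpiece i
  have hbe : (e : ℝ) = a * e + b := by simpa [hfix] using hab e hi0.le hi1
  have hnear : ∀ᶠ t : I in 𝓝[<] e, x i.castSucc < (t : ℝ) :=
    nhdsWithin_le_nhds ((continuous_subtype_val.tendsto e).eventually (lt_mem_nhds hi0))
  refine ⟨a, ?_⟩
  filter_upwards [hnear, self_mem_nhdsWithin] with t ht hte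
  rw [hab t ht.le (hte.le.trans hi1)]
  linear_combination -hbe

end IsPLplus

lemma eventually_nhdsGT_apply_eq_self_of_mem_commutator {G : Type*} [Group G]
    {φ : G →* Equiv.Perm I} (hφ : ∀ g, IsPLplus (φ g)) {e : I} (hfix : ∀ g, φ g e = e)
    (he : e < 1) {w : G} (hw : w ∈ commutator G) : ∀ᶠ t in 𝓝[>] e, φ w t = t := by
  have : (𝓝[>] e).NeBot := nhdsGT_neBot_of_exists_gt ⟨1, he⟩
  exact eventually_apply_eq_self_of_mem_commutator φ (l := 𝓝[>] e)
    (eventually_mem_nhdsWithin.mono fun _ (h : e < _) => h.ne')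
    (fun g => (hφ g).exists_hasSlope_nhdsGT (hfix g) he)
    (fun g => tendsto_nhdsGT_of_strictMono (hφ g).strictMono (hfix g)) hw

lemma eventually_nhdsLT_apply_eq_self_of_mem_commutator {G : Type*} [Group G]
    {φ : G →* Equiv.Perm I} (hφ : ∀ g, IsPLplus (φ g)) {e : I} (hfix : ∀ g, φ g e = e)
    (he : 0 < e) {w : G} (hw : w ∈ commutator G) : ∀ᶠ t in 𝓝[<] e, φ w t = t := by
  have : (𝓝[<] e).NeBot := nhdsLT_neBot_of_exists_lt ⟨0, he⟩
  exact eventually_apply_eq_self_of_mem_commutator φ (l := 𝓝[<] e)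
    (eventually_mem_nhdsWithin.mono fun _ (h : _ < e) => h.ne)
    (fun g => (hφ g).exists_hasSlope_nhdsLT (hfix g) he)
    (fun g => tendsto_nhdsLT_of_strictMono (hφ g).strictMono (hfix g)) hw

section CommonFixedPoints

variable {G α : Type*} [Group G]

def commonFixedPoints (φ : G →* Equiv.Perm α) : Set α := {x | ∀ g, φ g x = x}

lemma commonFixedPoints_freeGroup {X : Type*} (φ : FreeGroup X →* Equiv.Perm α) :
    commonFixedPoints φ = ⋂ x, fixedPoints (φ (FreeGroup.of x)) := by
  refine Subset.antisymm (fun y hy => mem_iInter.mpr fun x => hy _) fun y hy g => ?_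
  induction g using FreeGroup.induction_on with
  | C1 => simp
  | of x => exact mem_iInter.mp hy x
  | inv_of x h => rw [map_inv]; exact IsFixedPt.perm_inv h
  | mul u v hu hv => rw [map_mul, Equiv.Perm.coe_mul]; exact IsFixedPt.comp hu hv

lemma isClosed_commonFixedPoints [TopologicalSpace α] [T2Space α] {φ : G →* Equiv.Perm α}
    (hφ : ∀ g, Continuous (φ g)) : IsClosed (commonFixedPoints φ) := by
  simp only [commonFixedPoints, ofPred_forall]
  exact isClosed_iInter fun g => isClosed_eq (hφ g) continuous_id

variable {φ : G →* Equiv.Perm α}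

section LinearOrder

variable [LinearOrder α] (hφ : ∀ g, StrictMono (φ g))
include hφ

lemma apply_ne_self_of_mem_zpowers {z u v : G} (hu : u ∈ Subgroup.zpowers z)
    (hv : v ∈ Subgroup.zpowers z) (hv1 : v ≠ 1) {y : α} (huy : φ u y ≠ y) : φ v y ≠ y := by
  obtain ⟨m, rfl⟩ := Subgroup.mem_zpowers_iff.mp hu
  obtain ⟨n, rfl⟩ := Subgroup.mem_zpowers_iff.mp hv
  have hn : n ≠ 0 := by rintro rfl; exact hv1 (zpow_zero z)
  rw [map_zpow] at huy ⊢
  rw [Ne, zpow_apply_eq_self_iff_of_strictMono (hφ z) hn]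
  exact fun hz => huy (Equiv.Perm.zpow_apply_eq_self_of_apply_eq_self hz m)

variable {c d : α} (hgap : IsGap (commonFixedPoints φ) c d)
include hgap

lemma IsGap.apply_mem_Ioo_iff (g : G) {x : α} : φ g x ∈ Ioo c d ↔ x ∈ Ioo c d :=
  apply_mem_Ioo_iff_of_strictMono (hφ g) (hgap.left_mem g) (hgap.right_mem g)

lemma IsGap.normal_comap_fixingSubgroup :
    ((fixingSubgroup (Equiv.Perm α) (Ioo c d)).comap φ).Normal := by
  refine ⟨fun w hw g => ?_⟩
  simp only [Subgroup.mem_comap, mem_fixingSubgroup_iff, Equiv.Perm.smul_def] at hw ⊢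
  intro x hx
  simp only [map_mul, Equiv.Perm.mul_apply, hw _ ((hgap.apply_mem_Ioo_iff hφ g⁻¹).mpr hx)]
  simp

end LinearOrder

section ConditionallyComplete

variable [ConditionallyCompleteLinearOrder α] (hφ : ∀ g, StrictMono (φ g))
include hφ

lemma sSup_range_apply_mem_commonFixedPoints {p : α} (hbdd : BddAbove (range fun g => φ g p)) :
    sSup (range fun g => φ g p) ∈ commonFixedPoints φ := by
  have hle : ∀ g, sSup (range fun g => φ g p) ≤ φ g (sSup (range fun g => φ g p)) := fun g =>
    csSup_le (range_nonempty _) <| forall_mem_range.mpr fun h =>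
      calc φ h p = φ g (φ (g⁻¹ * h) p) := by simp
        _ ≤ φ g (sSup (range fun g => φ g p)) := (hφ g).monotone (le_csSup hbdd ⟨_, rfl⟩)
  exact fun g => le_antisymm (by simpa using (hφ g).monotone (hle g⁻¹)) (hle g)

variable {c d : α} (hgap : IsGap (commonFixedPoints φ) c d)
include hgap

lemma IsGap.exists_lt_apply {p q : α} (hp : p ∈ Ioo c d) (hq : q < d) : ∃ g, q < φ g p := by
  have horbit : ∀ g, φ g p ∈ Ioo c d := fun g => (hgap.apply_mem_Ioo_iff hφ g).mpr hp
  have hbdd : BddAbove (range fun g => φ g p) := ⟨d, forall_mem_range.mpr fun g => (horbit g).2.le⟩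
  -- the supremum of the orbit is a common fixed point in `(c, d]`, so it is `d`
  have hsup : sSup (range fun g => φ g p) = d := by
    refine le_antisymm (csSup_le (range_nonempty _) (forall_mem_range.mpr fun g => (horbit g).2.le))
      (not_lt.mp fun hlt => ?_)
    exact hgap.disjoint.ne_of_mem ⟨(horbit 1).1.trans_le (le_csSup hbdd ⟨1, rfl⟩), hlt⟩
      (sSup_range_apply_mem_commonFixedPoints hφ hbdd) rfl
  obtain ⟨_, ⟨g, rfl⟩, hg⟩ := exists_lt_of_lt_csSup (range_nonempty _) (hsup ▸ hq)
  exact ⟨g, hg⟩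

lemma IsGap.exists_disjointOn_conj {w : G} {p q : α} (hp : p ∈ Ioo c d) (hq : q < d)
    (hw : ∀ x ∈ Ioo c d, φ w x ≠ x → p ≤ x ∧ x ≤ q) :
    ∃ g, ∀ x ∈ Ioo c d, φ w x = x ∨ φ (g * w * g⁻¹) x = x := by
  obtain ⟨g, hg⟩ := hgap.exists_lt_apply hφ hp hq
  refine ⟨g, fun x hx => or_iff_not_imp_left.mpr fun hwx => not_not.mp fun hconj => ?_⟩
  have hy : φ g⁻¹ x ∈ Ioo c d := (hgap.apply_mem_Ioo_iff hφ g⁻¹).mpr hx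
  have hwy : φ w (φ g⁻¹ x) ≠ φ g⁻¹ x := fun h =>
    hconj (by simp only [map_mul, Equiv.Perm.mul_apply, h]; simp)
  have hgp : φ g p ≤ x := by simpa using (hφ g).monotone (hw _ hy hwy).1
  exact (hw x hx hwx).2.not_gt (hg.trans_le hgp)

end ConditionallyComplete

end CommonFixedPoints

section PLAction

variable {X : Type*} {φ : FreeGroup X →* Equiv.Perm I} (hφ : ∀ g, IsPLplus (φ g))
include hφ

lemma finite_setOf_isGap_commonFixedPoints [Finite X] :
    {p : I × I | IsGap (commonFixedPoints φ) p.1 p.2}.Finite := by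
  choose k T hT hfix using fun x => (hφ (FreeGroup.of x)).exists_fixedPoints_eq_iUnion
  have hF : commonFixedPoints φ = ⋃ f : (x : X) → Fin (k x), ⋂ x, T x (f x) := by
    rw [commonFixedPoints_freeGroup]
    simp only [hfix]
    exact iInf_iSup_eq
  rw [hF]
  exact finite_setOf_isGap_iUnion fun f => ordConnected_iInter fun x => hT x (f x)

theorem IsGap.exists_ne_one_mem_normalClosure {c d : I} (hgap : IsGap (commonFixedPoints φ) c d)
    {w : FreeGroup X} (hw : w ∈ commutator _) (hw1 : w ≠ 1) :
    ∃ w' ∈ Subgroup.normalClosure {w}, w' ≠ 1 ∧ ∀ x ∈ Ioo c d, φ w' x = x := by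
  by_cases hfix : ∀ x ∈ Ioo c d, φ w x = x
  · exact ⟨w, Subgroup.subset_normalClosure rfl, hw1, hfix⟩
  push Not at hfix
  obtain ⟨y, hy, hwy⟩ := hfix
  have hmono : ∀ g, StrictMono (φ g) := fun g => (hφ g).strictMono
  obtain ⟨p, hp, hpfix⟩ := (mem_nhdsGT_iff_exists_Ioo_subset' hgap.lt).mp
    (eventually_nhdsGT_apply_eq_self_of_mem_commutator hφ hgap.left_mem
      (hgap.lt.trans_le le_top) hw)
  obtain ⟨q, hq, hqfix⟩ := (mem_nhdsLT_iff_exists_Ioo_subset' hgap.lt).mp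
    (eventually_nhdsLT_apply_eq_self_of_mem_commutator hφ hgap.right_mem
      (bot_le.trans_lt hgap.lt) hw)
  have hsupp : ∀ x ∈ Ioo c d, φ w x ≠ x → p ≤ x ∧ x ≤ q := fun x hx hwx =>
    ⟨not_lt.mp fun h => hwx (hpfix ⟨hx.1, h⟩), not_lt.mp fun h => hwx (hqfix ⟨h, hx.2⟩)⟩
  obtain ⟨g, hg⟩ := hgap.exists_disjointOn_conj hmono
    ⟨hp, (hsupp y hy hwy).1.trans_lt hy.2⟩ hq hsupp
  have hN : w ∈ Subgroup.normalClosure {w} := Subgroup.subset_normalClosure rfl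
  have hgN := Subgroup.normalClosure_normal.conj_mem w hN g
  refine ⟨⁅w, g * w * g⁻¹⁆, ?_, fun h1 => ?_, fun x hx => ?_⟩
  · rw [commutatorElement_def]
    exact mul_mem (mul_mem (mul_mem hN hgN) (inv_mem hN)) (inv_mem hgN)
  · -- `w` and `g * w * g⁻¹` would be powers of one element, hence would move the same points
    obtain ⟨z, hwz, hgz⟩ :=
      FreeGroup.exists_mem_zpowers_of_commute (commutatorElement_eq_one_iff_commute.mp h1)
    exact (hg y hy).elim hwy
      (apply_ne_self_of_mem_zpowers hmono hwz hgz (by simpa using hw1) hwy)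
  · rw [map_commutatorElement]
    exact Equiv.Perm.commutatorElement_apply_eq_self_of_disjointOn
      (fun _ => hgap.apply_mem_Ioo_iff hmono _) (fun _ => hgap.apply_mem_Ioo_iff hmono _) hg hx

theorem exists_ne_one_forall_isGap_apply_eq_self {w : FreeGroup X} (hw : w ∈ commutator _)
    (hw1 : w ≠ 1) (S : Finset (I × I)) (hS : ∀ p ∈ S, IsGap (commonFixedPoints φ) p.1 p.2) :
    ∃ w' ∈ commutator _, w' ≠ 1 ∧ ∀ p ∈ S, ∀ x ∈ Ioo p.1 p.2, φ w' x = x := by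
  have hmono : ∀ g, StrictMono (φ g) := fun g => (hφ g).strictMono
  induction S using Finset.induction_on with
  | empty => exact ⟨w, hw, hw1, by simp⟩
  | insert p S _ ih =>
    obtain ⟨v, hv, hv1, hvS⟩ := ih fun q hq => hS q (Finset.mem_insert_of_mem hq)
    obtain ⟨v', hv'N, hv'1, hv'p⟩ :=
      (hS p (Finset.mem_insert_self p S)).exists_ne_one_mem_normalClosure hφ hv hv1
    refine ⟨v', Subgroup.normalClosure_le_normal (singleton_subset_iff.mpr hv) hv'N, hv'1,
      (Finset.forall_mem_insert _ _ _).mpr ⟨hv'p, fun q hq => ?_⟩⟩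
    have := (hS q (Finset.mem_insert_of_mem hq)).normal_comap_fixingSubgroup hmono
    have hvK : v ∈ (fixingSubgroup (Equiv.Perm I) (Ioo q.1 q.2)).comap φ := by
      simpa [mem_fixingSubgroup_iff] using hvS q hq
    simpa [mem_fixingSubgroup_iff] using
      Subgroup.normalClosure_le_normal (singleton_subset_iff.mpr hvK) hv'N

theorem exists_ne_one_map_eq_one [Finite X] {w : FreeGroup X} (hw : w ∈ commutator _)
    (hw1 : w ≠ 1) : ∃ w' ≠ 1, φ w' = 1 := by
  have hmono : ∀ g, StrictMono (φ g) := fun g => (hφ g).strictMono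
  have hfin := finite_setOf_isGap_commonFixedPoints hφ
  obtain ⟨w', -, hw'1, hw'⟩ := exists_ne_one_forall_isGap_apply_eq_self hφ hw hw1
    hfin.toFinset fun p hp => hfin.mem_toFinset.mp hp
  refine ⟨w', hw'1, Equiv.ext fun x => ?_⟩
  by_cases hx : x ∈ commonFixedPoints φ
  · exact hx w'
  obtain ⟨c, d, hgap, hcd⟩ := exists_isGap_mem_Ioo
    (isClosed_commonFixedPoints fun g => continuous_of_strictMono (hmono g))
    (fun g => map_bot_of_strictMono (hmono g)) (fun g => map_top_of_strictMono (hmono g)) hx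
  exact hw' (c, d) (hfin.mem_toFinset.mpr hgap) x hcd

end PLAction

/-- (Brin–Squier) $\mathrm{PL}^+(I)$ contains no nonabelian free subgroup: there is no
injective homomorphism from the free group on two generators whose image consists of
piecewise-linear homeomorphisms. -/
theorem no_free_subgroup_of_PL :
    ¬ ∃ φ : FreeGroup (Fin 2) →* Equiv.Perm unitInterval,
        Function.Injective φ ∧ ∀ w : FreeGroup (Fin 2), IsPLplus (φ w) := by
  rintro ⟨φ, hinj, hφ⟩
  have hcomm : ⁅FreeGroup.of (0 : Fin 2), FreeGroup.of (1 : Fin 2)⁆ ∈ commutator _ :=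
    commutator_def (FreeGroup (Fin 2)) ▸
      Subgroup.commutator_mem_commutator (Subgroup.mem_top _) (Subgroup.mem_top _)
  have hne : ⁅FreeGroup.of (0 : Fin 2), FreeGroup.of (1 : Fin 2)⁆ ≠ 1 := fun h =>
    absurd (FreeGroup.eq_of_of_mul_of_eq (commutatorElement_eq_one_iff_commute.mp h).eq)
      (by decide)
  obtain ⟨w, hw1, hw⟩ := exists_ne_one_map_eq_one hφ hcomm hne
  exact hw1 (hinj (hw.trans (map_one φ).symm))
end

section
/- Let G be a group, let f : G → ℝ be a homogeneous quasimorphism with defect ε(f) > 0, and let g ∈ [G,G]. Then scl(g) ≥ |f(g)| / (2·ε(f)). In particular, if g is a product of m commutators and n ≥ 1, then |f(g)| ≤ 2·m·ε(f). -/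
open Filter
open scoped commutatorElement

/-!
A homogeneous quasimorphism is conjugation invariant (conjugation changes it by at most `2 ε(f)`,
and homogeneity scales that error away), so a commutator `a b a⁻¹ b⁻¹ = (a b a⁻¹) b⁻¹` has
`|f ⁅a, b⁆| ≤ ε(f)`. A product of `m` commutators therefore has `|f| ≤ 2 m ε(f)`. Applied to
`gⁿ` this gives `n |f g| ≤ 2 cl(gⁿ) ε(f)`, and dividing by `n` and passing to the liminf gives
the bound on `scl g`.
-/

lemma eq_zero_of_forall_nat_mul_abs_le {x C : ℝ} (h : ∀ n : ℕ, n * |x| ≤ C) : x = 0 := by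
  by_contra hx
  obtain ⟨n, hn⟩ := exists_nat_gt (C / |x|)
  have := h n
  rw [div_lt_iff₀ (abs_pos.2 hx)] at hn
  linarith

namespace IsHomQM

variable {G : Type*} [Group G] {f : G → ℝ}

lemma abs_add_sub_map_mul_le (hf : IsHomQM f) (a b : G) :
    |f a + f b - f (a * b)| ≤ defect f :=
  le_csSup hf.2 ⟨a, b, rfl⟩

lemma defect_nonneg (hf : IsHomQM f) : 0 ≤ defect f :=
  (abs_nonneg _).trans (hf.abs_add_sub_map_mul_le 1 1)

lemma map_one (hf : IsHomQM f) : f 1 = 0 := by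
  simpa using hf.1 1 0

lemma map_inv (hf : IsHomQM f) (a : G) : f a⁻¹ = -f a := by
  simpa using hf.1 a (-1)

lemma map_pow (hf : IsHomQM f) (a : G) (n : ℕ) : f (a ^ n) = n * f a := by
  exact_mod_cast hf.1 a n

lemma abs_map_conj_sub_le (hf : IsHomQM f) (a b : G) :
    |f (a * b * a⁻¹) - f b| ≤ 2 * defect f := by
  have h₁ := hf.abs_add_sub_map_mul_le (a * b) a⁻¹
  have h₂ := hf.abs_add_sub_map_mul_le a b
  rw [hf.map_inv, abs_le] at h₁
  rw [abs_le] at h₂ ⊢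
  constructor <;> linarith

lemma map_conj (hf : IsHomQM f) (a b : G) : f (a * b * a⁻¹) = f b := by
  refine sub_eq_zero.1 (eq_zero_of_forall_nat_mul_abs_le (C := 2 * defect f) fun n => ?_)
  have h := hf.abs_map_conj_sub_le a (b ^ n)
  rwa [← conj_pow, hf.map_pow, hf.map_pow, ← mul_sub, abs_mul, Nat.abs_cast] at h

lemma abs_map_commutatorElement_le (hf : IsHomQM f) (a b : G) : |f ⁅a, b⁆| ≤ defect f := by
  have h := hf.abs_add_sub_map_mul_le (a * b * a⁻¹) b⁻¹
  rw [hf.map_conj, hf.map_inv, add_neg_cancel, zero_sub, abs_neg] at h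
  rwa [commutatorElement_def]

lemma abs_map_list_prod_le (hf : IsHomQM f) {L : List G} (hL : ∀ c ∈ L, |f c| ≤ defect f) :
    |f L.prod| ≤ 2 * L.length * defect f := by
  induction L with
  | nil => simp [hf.map_one]
  | cons c L ih =>
    have hc := hL c List.mem_cons_self
    have hprod := ih fun x hx => hL x (List.mem_cons_of_mem _ hx)
    have hmul := hf.abs_add_sub_map_mul_le c L.prod
    rw [List.prod_cons, List.length_cons, Nat.cast_succ, abs_le]
    rw [abs_le] at hc hprod hmul
    constructor <;> linarith

lemma abs_map_le_of_eq_prod_commutators (hf : IsHomQM f) {m : ℕ} {a b : Fin m → G} {g : G}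
    (hg : g = (List.ofFn fun i => ⁅a i, b i⁆).prod) : |f g| ≤ 2 * m * defect f := by
  subst hg
  simpa using hf.abs_map_list_prod_le (L := List.ofFn fun i => ⁅a i, b i⁆) (by
    simp only [List.mem_ofFn, forall_exists_index, forall_apply_eq_imp_iff]
    exact fun i => hf.abs_map_commutatorElement_le _ _)

end IsHomQM

section CommutatorLength

variable {G : Type*} [Group G]

def IsProdCommutators (m : ℕ) (x : G) : Prop :=
  ∃ a b : Fin m → G, x = (List.ofFn fun i => ⁅a i, b i⁆).prod

lemma isProdCommutators_zero_one : IsProdCommutators 0 (1 : G) :=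
  ⟨![], ![], by simp⟩

lemma isProdCommutators_one_commutatorElement (p q : G) : IsProdCommutators 1 ⁅p, q⁆ :=
  ⟨![p], ![q], by simp⟩

lemma IsProdCommutators.mul {m k : ℕ} {x y : G} (hx : IsProdCommutators m x)
    (hy : IsProdCommutators k y) : IsProdCommutators (m + k) (x * y) := by
  obtain ⟨a, b, rfl⟩ := hx
  obtain ⟨a', b', rfl⟩ := hy
  refine ⟨Fin.append a a', Fin.append b b', ?_⟩
  simp only [List.ofFn_add, Fin.append_left', Fin.append_right, List.prod_append]

lemma IsProdCommutators.pow {m : ℕ} {x : G} (hx : IsProdCommutators m x) (n : ℕ) :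
    IsProdCommutators (n * m) (x ^ n) := by
  induction n with
  | zero => simpa using isProdCommutators_zero_one
  | succ n ih => simpa [pow_succ, Nat.succ_mul] using ih.mul hx

lemma exists_isProdCommutators_of_mem_commutator {g : G} (hg : g ∈ commutator G) :
    ∃ m, IsProdCommutators m g := by
  rw [commutator_eq_closure] at hg
  induction hg using Subgroup.closure_induction'' with
  | mem _ hx =>
    obtain ⟨p, q, rfl⟩ := hx
    exact ⟨1, isProdCommutators_one_commutatorElement p q⟩
  | inv_mem _ hx =>
    obtain ⟨p, q, rfl⟩ := hx
    exact ⟨1, commutatorElement_inv p q ▸ isProdCommutators_one_commutatorElement q p⟩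
  | one => exact ⟨0, isProdCommutators_zero_one⟩
  | mul _ _ _ _ hx hy =>
    obtain ⟨m, hm⟩ := hx
    obtain ⟨k, hk⟩ := hy
    exact ⟨m + k, hm.mul hk⟩

lemma IsProdCommutators.commLength_le {m : ℕ} {x : G} (hx : IsProdCommutators m x) :
    commLength x ≤ m :=
  Nat.sInf_le hx

lemma IsProdCommutators.isProdCommutators_commLength {m : ℕ} {x : G}
    (hx : IsProdCommutators m x) : IsProdCommutators (commLength x) x :=
  Nat.sInf_mem (s := {k | IsProdCommutators k x}) ⟨m, hx⟩

lemma le_scl_of_forall_le {g : G} (hg : g ∈ commutator G) {c : ℝ}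
    (hc : ∀ n : ℕ, 1 ≤ n → c ≤ commLength (g ^ n) / n) : c ≤ scl g := by
  obtain ⟨m, hm⟩ := exists_isProdCommutators_of_mem_commutator hg
  -- `cl(gⁿ) ≤ n m` keeps the sequence bounded above, which `liminf` on `ℝ` needs
  have hbdd : ∀ n : ℕ, (commLength (g ^ n) : ℝ) / n ≤ m := fun n => by
    rcases n.eq_zero_or_pos with rfl | hn
    · simp
    · rw [div_le_iff₀ (by exact_mod_cast hn), mul_comm]
      exact_mod_cast (hm.pow n).commLength_le
  exact le_liminf_of_le (isCoboundedUnder_ge_of_le atTop hbdd) (eventually_atTop.2 ⟨1, hc⟩)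

end CommutatorLength

theorem scl_lower_bound_of_homQM_general (G : Type*) [Group G]
    (f : G → ℝ) (hf : IsHomQM f)
    (g : G) (hg : g ∈ commutator G) :
    scl g ≥ |f g| / (2 * defect f) ∧
      ∀ (m : ℕ) (a b : Fin m → G),
        g = (List.ofFn fun i => ⁅a i, b i⁆).prod → |f g| ≤ 2 * m * defect f := by
  refine ⟨le_scl_of_forall_le hg fun n hn => ?_,
    fun m a b hgab => hf.abs_map_le_of_eq_prod_commutators hgab⟩
  obtain ⟨m, hm⟩ := exists_isProdCommutators_of_mem_commutator hg
  obtain ⟨a, b, hab⟩ := (hm.pow n).isProdCommutators_commLength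
  have hpow : n * |f g| ≤ 2 * commLength (g ^ n) * defect f := by
    simpa [hf.map_pow, abs_mul] using hf.abs_map_le_of_eq_prod_commutators hab
  have hn₀ : (0 : ℝ) < n := by exact_mod_cast hn
  refine div_le_of_le_mul₀ (by linarith [hf.defect_nonneg]) (by positivity) ?_
  rw [div_mul_eq_mul_div, le_div_iff₀ hn₀]
  linarith

/-- A homogeneous quasimorphism with positive defect gives a lower bound for scl:
$\mathrm{scl}(g) \geq |f(g)|/(2\varepsilon(f))$.  In particular a product of $m$
commutators has $|f(g)| \le 2m\varepsilon(f)$. -/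
theorem scl_lower_bound_of_homQM (G : Type*) [Group G]
    (f : G → ℝ) (hf : IsHomQM f) (hpos : 0 < defect f)
    (g : G) (hg : g ∈ commutator G) :
    scl g ≥ |f g| / (2 * defect f) ∧
      ∀ (m : ℕ) (a b : Fin m → G),
        g = (List.ofFn fun i => ⁅a i, b i⁆).prod → |f g| ≤ 2 * m * defect f :=
  scl_lower_bound_of_homQM_general G f hf g hg
end

section
/- Let α be a set and G a subgroup of the group of bijections of α. Suppose g, a₁, b₁, …, a_m, b_m ∈ G satisfy g = ⁅a₁,b₁⁆⁅a₂,b₂⁆⋯⁅a_m,b_m⁆, the supports of g and of each aᵢ and bᵢ are all contained in a subset S ⊆ α, and there exists j ∈ G with jⁿ(S) ∩ S = ∅ for every integer n ≠ 0. Then for every integer N ≥ 1, the element g^N is a product of at most m+1 commutators of elements of G. -/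
/-!
Conjugation by `j ^ k` moves permutations supported in `S` to permutations supported in
`j ^ k (S)`, and these sets are pairwise disjoint. Hence `p ↦ p · (j p j⁻¹) ⋯ (jⁿ p j⁻ⁿ)`
is a homomorphism on permutations supported in `S`, which sends `g = ∏ ⁅aᵢ, bᵢ⁆` to a
product of `m` commutators. This diagonal image of `g` differs from `g ^ (n + 1)` by the single
commutator `⁅U, j⁆ = U (j U j⁻¹)⁻¹` with `U = gⁿ · (j gⁿ⁻¹ j⁻¹) ⋯ (jⁿ g⁰ j⁻ⁿ)`: conjugating
`U` by `j` shifts each factor one step, so the product telescopes.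
-/

open Filter
open scoped commutatorElement

namespace DiagonalTrick

variable {G : Type*} [Group G]

def CommutesWithConjugates (H : Subgroup G) (j : G) : Prop :=
  ∀ k : ℕ, ∀ x ∈ H, ∀ y ∈ H, Commute (MulAut.conj (j ^ (k + 1)) x) y

def diag (j : G) : ℕ → G → G
  | 0, p => p
  | n + 1, p => p * MulAut.conj j (diag j n p)

def stair (j g : G) : ℕ → G
  | 0 => 1
  | n + 1 => g ^ (n + 1) * MulAut.conj j (stair j g n)

theorem diag_mem {K : Subgroup G} {j p : G} (hj : j ∈ K) (hp : p ∈ K) (n : ℕ) :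
    diag j n p ∈ K := by
  induction n with
  | zero => exact hp
  | succ n ih =>
    exact mul_mem hp (by rw [MulAut.conj_apply]; exact mul_mem (mul_mem hj ih) (inv_mem hj))

theorem stair_mem {K : Subgroup G} {j g : G} (hj : j ∈ K) (hg : g ∈ K) (n : ℕ) :
    stair j g n ∈ K := by
  induction n with
  | zero => exact one_mem K
  | succ n ih =>
    exact mul_mem (pow_mem hg _)
      (by rw [MulAut.conj_apply]; exact mul_mem (mul_mem hj ih) (inv_mem hj))

theorem diag_one (j : G) (n : ℕ) : diag j n 1 = 1 := by
  induction n with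
  | zero => rfl
  | succ n ih => simp [diag, ih]

variable {H : Subgroup G} {j : G}

namespace CommutesWithConjugates

theorem commute_conj_pow_diag (hH : CommutesWithConjugates H j) {p y : G} (hp : p ∈ H)
    (hy : y ∈ H) (k n : ℕ) :
    Commute (MulAut.conj (j ^ (k + 1)) (diag j n p)) y := by
  induction n generalizing k with
  | zero => exact hH k p hp y hy
  | succ n ih =>
    rw [diag, map_mul]
    refine (hH k p hp y hy).mul_left ?_
    simpa only [pow_succ, map_mul, MulAut.mul_apply] using ih (k + 1)

theorem commute_conj_diag (hH : CommutesWithConjugates H j) {p y : G} (hp : p ∈ H)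
    (hy : y ∈ H) (n : ℕ) :
    Commute (MulAut.conj j (diag j n p)) y := by
  simpa using hH.commute_conj_pow_diag hp hy 0 n

theorem commute_diag_self (hH : CommutesWithConjugates H j) {g : G} (hg : g ∈ H) :
    ∀ n, Commute g (diag j n g)
  | 0 => Commute.refl g
  | n + 1 => (Commute.refl g).mul_right (hH.commute_conj_diag hg hg n).symm

theorem diag_mul (hH : CommutesWithConjugates H j) {p q : G} (hp : p ∈ H) (hq : q ∈ H)
    (n : ℕ) :
    diag j n (p * q) = diag j n p * diag j n q := by
  induction n with
  | zero => rfl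
  | succ n ih =>
    simp only [diag, ih, map_mul]
    exact (hH.commute_conj_diag hp hq n).symm.mul_mul_mul_comm p _

def diagHom (hH : CommutesWithConjugates H j) (n : ℕ) : H →* G where
  toFun p := diag j n p
  map_one' := diag_one j n
  map_mul' p q := hH.diag_mul p.2 q.2 n

theorem diag_prod_commutators (hH : CommutesWithConjugates H j) (n : ℕ) {m : ℕ}
    {a b : Fin m → G} (ha : ∀ i, a i ∈ H) (hb : ∀ i, b i ∈ H) :
    diag j n (List.ofFn fun i => ⁅a i, b i⁆).prod =
      (List.ofFn fun i => ⁅diag j n (a i), diag j n (b i)⁆).prod := by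
  have hprod : (List.ofFn fun i => ⁅a i, b i⁆).prod =
      H.subtype (List.ofFn fun i => ⁅(⟨a i, ha i⟩ : H), ⟨b i, hb i⟩⁆).prod := by
    simp [map_list_prod, List.map_ofFn, Function.comp_def, commutatorElement_def]
  have hmap := map_list_prod (hH.diagHom n) (List.ofFn fun i => ⁅(⟨a i, ha i⟩ : H), ⟨b i, hb i⟩⁆)
  simp only [List.map_ofFn, Function.comp_def, map_commutatorElement] at hmap
  rw [hprod]
  exact hmap

theorem pow_succ_eq_commutator_stair_mul_diag (hH : CommutesWithConjugates H j) {g : G}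
    (hg : g ∈ H) (n : ℕ) :
    g ^ (n + 1) = ⁅stair j g n, j⁆ * diag j n g := by
  have hcomm : ∀ U : G, ⁅U, j⁆ = U * (MulAut.conj j U)⁻¹ := fun U => by
    simp [commutatorElement_def, MulAut.conj_apply, mul_assoc]
  induction n with
  | zero => simp [stair, diag]
  | succ n ih =>
    rw [hcomm]
    simp only [stair, diag, map_mul, mul_inv_rev]
    set c := MulAut.conj j
    set U := stair j g n
    set D := diag j n g
    have hU : c (U * (c U)⁻¹) = c (g ^ (n + 1) * D⁻¹) := by
      rw [← hcomm, ih, mul_inv_cancel_right]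
    simp only [map_mul, map_inv] at hU
    have hDg : Commute (c D) (c (g ^ (n + 1))) :=
      ((hH.commute_diag_self hg n).pow_left _).symm.map c
    have hgD : Commute (c D) g := hH.commute_conj_diag hg hg n
    calc g ^ (n + 1 + 1) = g ^ (n + 1) * ((c D)⁻¹ * g * c D) := by
          rw [hgD.inv_mul_cancel, pow_succ]
      _ = g ^ (n + 1) * (c (g ^ (n + 1)) * (c D)⁻¹ * (c (g ^ (n + 1)))⁻¹) * g * c D := by
        rw [hDg.inv_left.symm.mul_inv_cancel]; group
      _ = g ^ (n + 1) * (c U * (c (c U))⁻¹) * (c (g ^ (n + 1)))⁻¹ * (g * c D) := by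
        rw [hU]; group
      _ = _ := by group

end CommutesWithConjugates

open Equiv

theorem mem_fixingSubgroup_compl_iff {α : Type*} {S : Set α} {p : Perm α} :
    p ∈ fixingSubgroup (Perm α) Sᶜ ↔ ∀ x, p x ≠ x → x ∈ S := by
  simp only [mem_fixingSubgroup_iff, Set.mem_compl_iff, Perm.smul_def]
  exact forall_congr' fun x => not_imp_comm

theorem commutesWithConjugates_fixingSubgroup_compl {α : Type*} {S : Set α} {j : Perm α}
    (hjS : ∀ n : ℤ, n ≠ 0 → ∀ x ∈ S, (j ^ n) x ∉ S) :
    CommutesWithConjugates (fixingSubgroup (Perm α) Sᶜ) j := by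
  intro k p hp q hq
  refine Perm.Disjoint.commute fun x => ?_
  by_cases hx : x ∈ S
  · left
    have hout : (j ^ (-((k + 1 : ℕ) : ℤ))) x ∉ S := hjS _ (by omega) x hx
    rw [mem_fixingSubgroup_compl_iff] at hp
    rw [MulAut.conj_apply, Perm.mul_apply, Perm.mul_apply, ← zpow_natCast, ← zpow_neg,
      not_imp_comm.1 (hp _) hout, ← Perm.mul_apply, ← zpow_add, add_neg_cancel, zpow_zero,
      Perm.one_apply]
  · right
    exact not_imp_comm.1 (mem_fixingSubgroup_compl_iff.1 hq x) hx

end DiagonalTrick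

open DiagonalTrick

/-- The diagonal trick: if $g$ is a product of $m$ commutators of elements of $G$
all supported in a set $S$ that can be displaced off itself by all nonzero powers of some
$j \in G$, then every positive power $g^N$ is a product of at most $m+1$ commutators
of elements of $G$. -/
theorem power_is_product_of_few_commutators {α : Type*}
    (G : Subgroup (Equiv.Perm α)) (S : Set α)
    (g : Equiv.Perm α) (hgG : g ∈ G)
    (m : ℕ) (a b : Fin m → Equiv.Perm α)
    (haG : ∀ i, a i ∈ G) (hbG : ∀ i, b i ∈ G)
    (hprod : g = (List.ofFn fun i => ⁅a i, b i⁆).prod)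
    (hgS : ∀ x, g x ≠ x → x ∈ S)
    (haS : ∀ i, ∀ x, a i x ≠ x → x ∈ S)
    (hbS : ∀ i, ∀ x, b i x ≠ x → x ∈ S)
    (j : Equiv.Perm α) (hjG : j ∈ G)
    (hjS : ∀ n : ℤ, n ≠ 0 → ∀ x ∈ S, (j ^ n) x ∉ S) :
    ∀ N : ℕ, 1 ≤ N →
      ∃ m' ≤ m + 1, ∃ a' b' : Fin m' → Equiv.Perm α,
        (∀ i, a' i ∈ G) ∧ (∀ i, b' i ∈ G) ∧
        g ^ N = (List.ofFn fun i => ⁅a' i, b' i⁆).prod := by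
  intro N hN
  obtain ⟨n, rfl⟩ : ∃ n, N = n + 1 := ⟨N - 1, by omega⟩
  have hH := commutesWithConjugates_fixingSubgroup_compl hjS
  refine ⟨m + 1, le_rfl, Fin.cons (stair j g n) fun i => diag j n (a i),
    Fin.cons j fun i => diag j n (b i),
    Fin.cases (stair_mem hjG hgG n) fun i => diag_mem hjG (haG i) n,
    Fin.cases hjG fun i => diag_mem hjG (hbG i) n, ?_⟩
  rw [List.ofFn_succ, List.prod_cons]
  simp only [Fin.cons_zero, Fin.cons_succ]
  rw [← hH.diag_prod_commutators n (fun i => mem_fixingSubgroup_compl_iff.2 (haS i))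
    (fun i => mem_fixingSubgroup_compl_iff.2 (hbS i)), ← hprod]
  exact hH.pow_succ_eq_commutator_stair_mul_diag (mem_fixingSubgroup_compl_iff.2 hgS) n
end

section
/- Let α be a set and G a subgroup of the group of bijections of α. Suppose g ∈ [G,G] is a product of commutators of elements of G whose supports, together with the support of g, are all contained in a subset S ⊆ α, and there exists j ∈ G with jⁿ(S) ∩ S = ∅ for every integer n ≠ 0. Then scl(g) = 0. -/
open Filter
open scoped commutatorElement

/-!
Only the split of `α` into `S` and `V = ⋃_{k ≥ 1} jᵏ S` matters: conjugation by `j` maps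
permutations supported in `S` or in `V` to ones supported in `V`, and permutations supported in
`S` commute with those supported in `V`. With `xₖ = jᵏ x j⁻ᵏ`, these commutations give
`x₀ x₁ ⋯ xₙ₋₁ = ∏ᵢ ⁅∏ₖ (aᵢ)ₖ, ∏ₖ (bᵢ)ₖ⁆` for `g = ∏ᵢ ⁅aᵢ, bᵢ⁆`, and
`gⁿ = ⁅h, j⁆ · j (g₀ ⋯ gₙ₋₁) j⁻¹` with `h = ∏_{k<n} gₖ^(n-k)`. So `cl(gⁿ) ≤ m + 1` for all `n`.
-/

section Commutators

variable {G : Type*} [Group G]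

theorem Subgroup.commutatorElement_mem (H : Subgroup G) {x y : G} (hx : x ∈ H) (hy : y ∈ H) :
    ⁅x, y⁆ ∈ H := by
  rw [commutatorElement_def]
  exact H.mul_mem (H.mul_mem (H.mul_mem hx hy) (H.inv_mem hx)) (H.inv_mem hy)

theorem commutatorElement_mul_mul_of_commute {x y u v : G}
    (hux : Commute u x) (huy : Commute u y) (hvx : Commute v x) (hvy : Commute v y) :
    ⁅x * u, y * v⁆ = ⁅x, y⁆ * ⁅u, v⁆ := by
  simp only [commutatorElement_def, mul_inv_rev, mul_assoc]
  rw [huy.left_comm, hux.inv_inv.left_comm, hvx.inv_right.left_comm, hux.inv_right.left_comm,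
    hvy.inv_inv.eq, huy.inv_inv.left_comm, hvy.inv_right.left_comm, huy.inv_right.left_comm]

theorem List.prod_ofFn_mul_of_commute {m : ℕ} (X Y : Fin m → G)
    (h : ∀ i i', Commute (Y i) (X i')) :
    (List.ofFn fun i => X i * Y i).prod = (List.ofFn X).prod * (List.ofFn Y).prod := by
  induction m with
  | zero => simp
  | succ m ih =>
    have hY : Commute (Y 0) (List.ofFn fun i => X i.succ).prod :=
      Commute.list_prod_right _ _ fun y hy => by
        obtain ⟨i, rfl⟩ := List.mem_ofFn.mp hy
        exact h _ _
    simp only [List.ofFn_succ, List.prod_cons, ih _ _ fun i i' => h _ _, mul_assoc,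
      hY.left_comm]

theorem commLength_le_of_eq_prod {g : G} {m : ℕ} (a b : Fin m → G)
    (h : g = (List.ofFn fun i => ⁅a i, b i⁆).prod) : commLength g ≤ m :=
  Nat.sInf_le ⟨a, b, h⟩

theorem commLength_commutatorElement_mul_prod_le (h k : G) {m : ℕ} (a b : Fin m → G) :
    commLength (⁅h, k⁆ * (List.ofFn fun i => ⁅a i, b i⁆).prod) ≤ m + 1 :=
  commLength_le_of_eq_prod (Fin.cons h a) (Fin.cons k b) (by simp [List.ofFn_succ])

theorem scl_eq_zero_of_commLength_pow_le {g : G} (C : ℕ) (h : ∀ n, commLength (g ^ n) ≤ C) :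
    scl g = 0 :=
  Tendsto.liminf_eq <| squeeze_zero (fun n => by positivity)
    (fun n => div_le_div_of_nonneg_right (by exact_mod_cast h n) n.cast_nonneg)
    (tendsto_const_div_atTop_nhds_zero_nat (C : ℝ))

end Commutators

section ConjPowProd

variable {G : Type*} [Group G]

/-- `conjPowProd j x n = x * (j x j⁻¹) * (j² x j⁻²) * ⋯ * (jⁿ⁻¹ x j¹⁻ⁿ)`. -/
def conjPowProd (j x : G) : ℕ → G
  | 0 => 1
  | n + 1 => x * MulAut.conj j (conjPowProd j x n)

theorem pow_succ_eq_commutatorElement_mul_conj {x j h Q : G} {n : ℕ} (hQ : Commute x Q)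
    (hh : x ^ n = ⁅h, j⁆ * Q) :
    x ^ (n + 1) = ⁅x ^ (n + 1) * MulAut.conj j h, j⁆ * MulAut.conj j (x * Q) :=
  calc x ^ (n + 1)
      = x ^ (n + 1) * MulAut.conj j (x ^ n * Q⁻¹ * (x ^ n)⁻¹ * Q) := by
        rw [(hQ.pow_left n).inv_right.eq]; simp
    _ = x ^ (n + 1) * MulAut.conj j (⁅h, j⁆ * (x ^ n)⁻¹ * Q) := by
        rw [eq_mul_inv_of_mul_eq hh.symm]
    _ = ⁅x ^ (n + 1) * MulAut.conj j h, j⁆ * MulAut.conj j (x * Q) := by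
        simp only [MulAut.conj_apply, commutatorElement_def]
        group

theorem exists_pow_eq_commutatorElement_mul_conj_conjPowProd {x j : G}
    (hcomm : ∀ n, Commute x (MulAut.conj j (conjPowProd j x n))) (n : ℕ) :
    ∃ h : G, x ^ n = ⁅h, j⁆ * MulAut.conj j (conjPowProd j x n) := by
  induction n with
  | zero => exact ⟨1, by simp [conjPowProd]⟩
  | succ n ih =>
    obtain ⟨h, hh⟩ := ih
    exact ⟨_, pow_succ_eq_commutatorElement_mul_conj (hcomm n) hh⟩

end ConjPowProd

section DisplacedSubgroups

variable {G : Type*} [Group G] {j : G} {H K : Subgroup G}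

theorem conj_conjPowProd_mem (hH : ∀ x ∈ H, MulAut.conj j x ∈ K)
    (hK : ∀ y ∈ K, MulAut.conj j y ∈ K) {x : G} (hx : x ∈ H) (n : ℕ) :
    MulAut.conj j (conjPowProd j x n) ∈ K := by
  induction n with
  | zero => simp [conjPowProd]
  | succ n ih =>
    rw [conjPowProd, map_mul]
    exact K.mul_mem (hH x hx) (hK _ ih)

theorem conjPowProd_prod_commutatorElement (hHK : ∀ x ∈ H, ∀ y ∈ K, Commute x y)
    (hH : ∀ x ∈ H, MulAut.conj j x ∈ K) (hK : ∀ y ∈ K, MulAut.conj j y ∈ K)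
    {m : ℕ} {a b : Fin m → G} (ha : ∀ i, a i ∈ H) (hb : ∀ i, b i ∈ H) (n : ℕ) :
    conjPowProd j (List.ofFn fun i => ⁅a i, b i⁆).prod n =
      (List.ofFn fun i => ⁅conjPowProd j (a i) n, conjPowProd j (b i) n⁆).prod := by
  induction n with
  | zero => simp [conjPowProd]
  | succ n ih =>
    have hA : ∀ {x}, x ∈ H → MulAut.conj j (conjPowProd j x n) ∈ K :=
      fun hx => conj_conjPowProd_mem hH hK hx n
    calc conjPowProd j (List.ofFn fun i => ⁅a i, b i⁆).prod (n + 1)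
        = (List.ofFn fun i => ⁅a i, b i⁆).prod * (List.ofFn fun i =>
            ⁅MulAut.conj j (conjPowProd j (a i) n), MulAut.conj j (conjPowProd j (b i) n)⁆).prod :=
          by simp only [conjPowProd, ih, map_list_prod, List.map_ofFn, Function.comp_def,
            map_commutatorElement]
      _ = (List.ofFn fun i => ⁅a i, b i⁆ *
            ⁅MulAut.conj j (conjPowProd j (a i) n), MulAut.conj j (conjPowProd j (b i) n)⁆).prod :=
          (List.prod_ofFn_mul_of_commute _ _ fun i i' => (hHK _
            (H.commutatorElement_mem (ha i') (hb i'))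
            _ (K.commutatorElement_mem (hA (ha i)) (hA (hb i)))).symm).symm
      _ = _ := congrArg (fun f => (List.ofFn f).prod) <| funext fun i =>
          (commutatorElement_mul_mul_of_commute
            (hHK _ (ha i) _ (hA (ha i))).symm (hHK _ (hb i) _ (hA (ha i))).symm
            (hHK _ (ha i) _ (hA (hb i))).symm (hHK _ (hb i) _ (hA (hb i))).symm).symm

theorem commLength_pow_le_of_conj_mem (hHK : ∀ x ∈ H, ∀ y ∈ K, Commute x y)
    (hH : ∀ x ∈ H, MulAut.conj j x ∈ K) (hK : ∀ y ∈ K, MulAut.conj j y ∈ K)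
    {g : G} {m : ℕ} {a b : Fin m → G} (hprod : g = (List.ofFn fun i => ⁅a i, b i⁆).prod)
    (ha : ∀ i, a i ∈ H) (hb : ∀ i, b i ∈ H) (n : ℕ) :
    commLength (g ^ n) ≤ m + 1 := by
  have hg : g ∈ H := hprod ▸ H.list_prod_mem (by
    simp only [List.mem_ofFn, forall_exists_index]
    rintro _ i rfl
    exact H.commutatorElement_mem (ha i) (hb i))
  obtain ⟨h, hh⟩ := exists_pow_eq_commutatorElement_mul_conj_conjPowProd
    (fun n => hHK g hg _ (conj_conjPowProd_mem hH hK hg n)) n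
  rw [hh, hprod, conjPowProd_prod_commutatorElement hHK hH hK ha hb, map_list_prod,
    List.map_ofFn, Function.comp_def]
  simp only [map_commutatorElement]
  exact commLength_commutatorElement_mul_prod_le h j _ _

end DisplacedSubgroups

section FixingSubgroup

open scoped Pointwise

variable {G α : Type*} [Group G] [MulAction G α]

theorem smul_smul_eq_of_mem_fixingSubgroup_compl {A B : Set α} (hAB : Disjoint A B) {g h : G}
    (hg : g ∈ fixingSubgroup G Aᶜ) (hh : h ∈ fixingSubgroup G Bᶜ) {x : α} (hx : x ∉ A) :
    g • h • x = h • g • x := by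
  rw [mem_fixingSubgroup_iff] at hg hh
  have hhx : h • x ∉ A := fun hhx => by
    have : h • h • x = h • x := hh _ (Set.disjoint_left.mp hAB hhx)
    exact hx (smul_left_cancel h this ▸ hhx)
  rw [hg _ hhx, hg _ hx]

theorem commute_of_mem_fixingSubgroup_compl [FaithfulSMul G α] {A B : Set α} (hAB : Disjoint A B)
    {g h : G} (hg : g ∈ fixingSubgroup G Aᶜ) (hh : h ∈ fixingSubgroup G Bᶜ) : Commute g h := by
  refine eq_of_smul_eq_smul (α := α) fun x => ?_
  rw [mul_smul, mul_smul]
  by_cases hx : x ∈ A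
  · exact (smul_smul_eq_of_mem_fixingSubgroup_compl hAB.symm hh hg
      (Set.disjoint_left.mp hAB hx)).symm
  · exact smul_smul_eq_of_mem_fixingSubgroup_compl hAB hg hh hx

theorem conj_mem_fixingSubgroup_compl {A B : Set α} {j : G} (hAB : j • A ⊆ B) {g : G}
    (hg : g ∈ fixingSubgroup G Aᶜ) : MulAut.conj j g ∈ fixingSubgroup G Bᶜ :=
  fixingSubgroup_antitone G α (Set.compl_subset_compl.mpr hAB)
    (Set.conj_mem_fixingSubgroup (Set.smul_set_compl) hg)

theorem exists_disjoint_smul_subset {S : Set α} {j : G}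
    (hS : ∀ n : ℕ, Disjoint S (j ^ (n + 1) • S)) :
    ∃ V : Set α, Disjoint S V ∧ j • S ⊆ V ∧ j • V ⊆ V := by
  refine ⟨⋃ n : ℕ, j ^ (n + 1) • S, Set.disjoint_iUnion_right.mpr hS,
    Set.subset_iUnion_of_subset 0 (by rw [zero_add, pow_one]), ?_⟩
  rw [Set.smul_set_iUnion]
  exact Set.iUnion_subset fun n => Set.subset_iUnion_of_subset (n + 1) (by
    rw [smul_smul, ← pow_succ'])

theorem scl_eq_zero_of_disjoint_pow_smul [FaithfulSMul G α] {S : Set α} {g : G} {m : ℕ}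
    {a b : Fin m → G} (hprod : g = (List.ofFn fun i => ⁅a i, b i⁆).prod)
    (ha : ∀ i, a i ∈ fixingSubgroup G Sᶜ) (hb : ∀ i, b i ∈ fixingSubgroup G Sᶜ) {j : G}
    (hj : ∀ n : ℕ, Disjoint S (j ^ (n + 1) • S)) : scl g = 0 := by
  obtain ⟨V, hSV, hjS, hjV⟩ := exists_disjoint_smul_subset hj
  exact scl_eq_zero_of_commLength_pow_le (m + 1) (commLength_pow_le_of_conj_mem
    (fun _ hx _ hy => commute_of_mem_fixingSubgroup_compl hSV hx hy)
    (fun _ => conj_mem_fixingSubgroup_compl hjS) (fun _ => conj_mem_fixingSubgroup_compl hjV)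
    hprod ha hb)

end FixingSubgroup

theorem scl_eq_zero_of_displaceable_support_general {α : Type*}
    (G : Subgroup (Equiv.Perm α)) (S : Set α) (g : G)
    (m : ℕ) (a b : Fin m → G)
    (hprod : g = (List.ofFn fun i => ⁅a i, b i⁆).prod)
    (haS : ∀ i, ∀ x, (a i : Equiv.Perm α) x ≠ x → x ∈ S)
    (hbS : ∀ i, ∀ x, (b i : Equiv.Perm α) x ≠ x → x ∈ S)
    (j : G) (hjS : ∀ n : ℤ, n ≠ 0 → ∀ x ∈ S, ((j : Equiv.Perm α) ^ n) x ∉ S) :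
    scl g = 0 := by
  refine scl_eq_zero_of_disjoint_pow_smul hprod
    (fun i => (mem_fixingSubgroup_compl_iff_movedBy_subset G).mpr (haS i))
    (fun i => (mem_fixingSubgroup_compl_iff_movedBy_subset G).mpr (hbS i)) (j := j) fun n => ?_
  rw [Set.disjoint_right]
  rintro _ ⟨x, hx, rfl⟩
  have hjx := hjS (n + 1 : ℕ) (by omega) x hx
  rwa [zpow_natCast] at hjx

/-- If $g \in [G,G]$ is a product of commutators of elements of $G$, all supported
(along with $g$) in a set $S$ that is displaced off itself by all nonzero powers of
some $j \in G$, then $\mathrm{scl}(g) = 0$. -/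
theorem scl_eq_zero_of_displaceable_support {α : Type*}
    (G : Subgroup (Equiv.Perm α)) (S : Set α) (g : G)
    (m : ℕ) (a b : Fin m → G)
    (hprod : g = (List.ofFn fun i => ⁅a i, b i⁆).prod)
    (hgS : ∀ x, (g : Equiv.Perm α) x ≠ x → x ∈ S)
    (haS : ∀ i, ∀ x, (a i : Equiv.Perm α) x ≠ x → x ∈ S)
    (hbS : ∀ i, ∀ x, (b i : Equiv.Perm α) x ≠ x → x ∈ S)
    (j : G) (hjS : ∀ n : ℤ, n ≠ 0 → ∀ x ∈ S, ((j : Equiv.Perm α) ^ n) x ∉ S) :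
    scl g = 0 :=
  scl_eq_zero_of_displaceable_support_general G S g m a b hprod haS hbS j hjS
end

section
/- Let α be a set, let g and j be bijections of α, let S ⊆ α contain the support of g, and suppose jⁿ(S) ∩ S = ∅ for every integer n ≠ 0. Fix an integer n ≥ 0 and define Δₙ(g) = ∏_{i=0}^{n} jⁱ g j⁻ⁱ and g′ = ∏_{i=0}^{n} jⁱ g^{i+1} j⁻ⁱ (products taken in order of increasing i). Then g′ j g′⁻¹ j⁻¹ = Δₙ(g) · j^{n+1} g^{-(n+1)} j^{-(n+1)}. -/
open Filter
open scoped commutatorElement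

/-! The conjugates `Aᵢ = jⁱ g j⁻ⁱ` are supported in the pairwise disjoint translates `jⁱ(S)`,
so they commute, and conjugation by `j` shifts `Aᵢ` to `Aᵢ₊₁`. Hence `g' = ∏ Aᵢ^(i+1)`,
`j g' j⁻¹ = ∏ Aᵢ₊₁^(i+1)`, and `[g', j] = g' (j g' j⁻¹)⁻¹` telescopes, exponent by exponent,
to `∏ Aᵢ · Aₙ₊₁^-(n+1)`. -/

namespace Equiv.Perm

variable {α : Type*}

theorem commute_of_moved_subset_of_disjoint {f g : Perm α} {S T : Set α}
    (hST : _root_.Disjoint S T)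
    (hf : ∀ x, f x ≠ x → x ∈ S) (hg : ∀ x, g x ≠ x → x ∈ T) : Commute f g :=
  Disjoint.commute fun x => by
    by_contra! h
    exact Set.disjoint_left.1 hST (hf x h.1) (hg x h.2)

theorem conj_moved_mem_image {g h : Perm α} {S : Set α} (hg : ∀ x, g x ≠ x → x ∈ S)
    (x : α) (hx : (h * g * h⁻¹) x ≠ x) : x ∈ h '' S :=
  ⟨h⁻¹ x, hg _ fun hfix => hx (by rw [mul_apply, mul_apply, hfix]; simp), by simp⟩

theorem disjoint_image_zpow {j : Perm α} {S : Set α}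
    (hj : ∀ n : ℤ, n ≠ 0 → ∀ x ∈ S, (j ^ n) x ∉ S) {i k : ℤ} (hik : i ≠ k) :
    _root_.Disjoint (⇑(j ^ i) '' S) (⇑(j ^ k) '' S) := by
  rw [Set.disjoint_left]
  rintro _ ⟨x, hx, rfl⟩ ⟨y, hy, hxy⟩
  refine hj (-k + i) (by omega) x hx ?_
  rw [zpow_add, zpow_neg, mul_apply, ← hxy]
  simpa using hy

theorem commute_conj_zpow {g j : Perm α} {S : Set α} (hg : ∀ x, g x ≠ x → x ∈ S)
    (hj : ∀ n : ℤ, n ≠ 0 → ∀ x ∈ S, (j ^ n) x ∉ S) (i k : ℤ) :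
    Commute (j ^ i * g * (j ^ i)⁻¹) (j ^ k * g * (j ^ k)⁻¹) := by
  rcases eq_or_ne i k with rfl | hik
  · exact Commute.refl _
  · exact commute_of_moved_subset_of_disjoint (disjoint_image_zpow hj hik)
      (conj_moved_mem_image hg) (conj_moved_mem_image hg)

end Equiv.Perm

section Telescope

variable {G : Type*} [Group G]

theorem List.conj_prod_ofFn (j : G) {n : ℕ} (f : Fin n → G) :
    j * (List.ofFn f).prod * j⁻¹ = (List.ofFn fun i => j * f i * j⁻¹).prod := by
  simpa [List.map_ofFn, Function.comp_def] using map_list_prod (MulAut.conj j) (List.ofFn f)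

theorem List.prod_ofFn_succ' {n : ℕ} (f : Fin (n + 1) → G) :
    (List.ofFn f).prod = (List.ofFn fun i : Fin n => f i.castSucc).prod * f (Fin.last n) := by
  rw [List.ofFn_succ', List.prod_concat]

theorem prod_ofFn_pow_succ_mul_inv_shift {A : ℕ → G} (hA : ∀ i k, Commute (A i) (A k))
    (n : ℕ) :
    (List.ofFn fun i : Fin (n + 1) => A i ^ ((i : ℕ) + 1)).prod *
        ((List.ofFn fun i : Fin (n + 1) => A (i + 1) ^ ((i : ℕ) + 1)).prod)⁻¹ =
      (List.ofFn fun i : Fin (n + 1) => A i).prod * (A (n + 1) ^ (n + 1))⁻¹ := by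
  induction n with
  | zero => simp
  | succ n ih =>
    set P := (List.ofFn fun i : Fin (n + 1) => A i ^ ((i : ℕ) + 1)).prod
    set Q := (List.ofFn fun i : Fin (n + 1) => A (i + 1) ^ ((i : ℕ) + 1)).prod
    have hQ : Commute (A (n + 1) ^ (n + 2) * (A (n + 2) ^ (n + 2))⁻¹) Q⁻¹ := by
      refine (Commute.list_prod_right _ _ ?_).inv_right
      simp only [List.mem_ofFn, forall_exists_index]
      rintro _ k rfl
      exact (((hA _ _).pow_pow _ _).mul_left ((hA _ _).pow_pow _ _).inv_left)
    rw [List.prod_ofFn_succ', List.prod_ofFn_succ' (fun i : Fin (n + 2) => A (i + 1) ^ _),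
      List.prod_ofFn_succ' (fun i : Fin (n + 2) => A i)]
    simp only [Fin.val_castSucc, Fin.val_last]
    calc P * A (n + 1) ^ (n + 2) * (Q * A (n + 2) ^ (n + 2))⁻¹
        = P * (A (n + 1) ^ (n + 2) * (A (n + 2) ^ (n + 2))⁻¹) * Q⁻¹ := by group
      _ = P * Q⁻¹ * (A (n + 1) ^ (n + 2) * (A (n + 2) ^ (n + 2))⁻¹) := by
          rw [mul_assoc, hQ.eq, ← mul_assoc]
      _ = _ := by rw [ih, pow_succ]; group

end Telescope

/-- The key commutator identity in the diagonal trick: with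
$\Delta_n(g) = \prod_{i=0}^n j^i g j^{-i}$ and $g' = \prod_{i=0}^n j^i g^{i+1} j^{-i}$,
one has $[g',j] = \Delta_n(g)\, j^{n+1} g^{-(n+1)} j^{-(n+1)}$. -/
theorem diagonal_trick_commutator_identity {α : Type*}
    (g j : Equiv.Perm α) (S : Set α)
    (hg : ∀ x, g x ≠ x → x ∈ S)
    (hj : ∀ n : ℤ, n ≠ 0 → ∀ x ∈ S, (j ^ n) x ∉ S)
    (n : ℕ) :
    (List.ofFn fun i : Fin (n + 1) => j ^ (i : ℕ) * g ^ ((i : ℕ) + 1) * (j ^ (i : ℕ))⁻¹).prod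
        * j *
      ((List.ofFn fun i : Fin (n + 1) =>
          j ^ (i : ℕ) * g ^ ((i : ℕ) + 1) * (j ^ (i : ℕ))⁻¹).prod)⁻¹ * j⁻¹ =
    (List.ofFn fun i : Fin (n + 1) => j ^ (i : ℕ) * g * (j ^ (i : ℕ))⁻¹).prod *
      (j ^ (n + 1) * (g ^ (n + 1))⁻¹ * (j ^ (n + 1))⁻¹) := by
  set A : ℕ → Equiv.Perm α := fun i => j ^ i * g * (j ^ i)⁻¹
  have hA : ∀ i k, Commute (A i) (A k) := fun i k => by
    simpa only [zpow_natCast] using Equiv.Perm.commute_conj_zpow hg hj i k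
  have hpow : ∀ i m : ℕ, j ^ i * g ^ m * (j ^ i)⁻¹ = A i ^ m := fun _ _ => conj_pow.symm
  have hshift : ∀ i m : ℕ, j * A i ^ m * j⁻¹ = A (i + 1) ^ m := fun i m => by
    rw [← hpow, ← hpow, pow_succ']
    group
  set P := (List.ofFn fun i : Fin (n + 1) => A i ^ ((i : ℕ) + 1)).prod
  have hconjP :
      j * P * j⁻¹ = (List.ofFn fun i : Fin (n + 1) => A (i + 1) ^ ((i : ℕ) + 1)).prod := by
    simp only [P, List.conj_prod_ofFn, hshift]
  calc _ = P * (j * P * j⁻¹)⁻¹ := by simp only [hpow, P]; group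
    _ = _ := by
      rw [hconjP, prod_ofFn_pow_succ_mul_inv_shift hA, ← conj_inv, hpow]
end

section
/- Let α be a set, let j be a bijection of α, and let S ⊆ α satisfy jⁿ(S) ∩ S = ∅ for every integer n ≠ 0. Fix an integer n ≥ 0 and for a bijection c of α define Δₙ(c) = ∏_{i=0}^{n} jⁱ c j⁻ⁱ (product in order of increasing i). Then for all bijections a, b of α with support contained in S: Δₙ(ab) = Δₙ(a)·Δₙ(b), and consequently Δₙ(⁅a,b⁆) = ⁅Δₙ(a), Δₙ(b)⁆. -/
open Filter
open scoped commutatorElement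

/-! The conjugates `jⁱ c j⁻ⁱ` and `jᵏ d j⁻ᵏ` of two permutations supported in `S` are supported
in the disjoint sets `jⁱ S` and `jᵏ S` when `i ≠ k`, so they commute. Hence in
`Δₙ(ab) = ∏ᵢ (jⁱ a j⁻ⁱ)(jⁱ b j⁻ⁱ)` every `b`-factor can be moved past all later `a`-factors,
and `Δₙ` is a homomorphism on the subgroup of permutations supported in `S`; a homomorphism
maps commutators to commutators. -/

theorem List.prod_ofFn_mul_of_commute_s12 {M : Type*} [Monoid M] :
    ∀ {n : ℕ} (f g : Fin n → M), (∀ i k, k < i → Commute (f i) (g k)) →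
      (List.ofFn fun i => f i * g i).prod = (List.ofFn f).prod * (List.ofFn g).prod
  | 0, _, _, _ => by simp
  | n + 1, f, g, hfg => by
    have ih := List.prod_ofFn_mul_of_commute_s12 (fun i => f i.succ) (fun i => g i.succ)
      fun i k hki => hfg i.succ k.succ (Fin.succ_lt_succ_iff.mpr hki)
    have hg₀ : Commute (g 0) (List.ofFn fun i => f i.succ).prod :=
      Commute.list_prod_right _ _ fun x hx => by
        obtain ⟨i, rfl⟩ := List.mem_ofFn.mp hx
        exact (hfg i.succ 0 (Fin.succ_pos i)).symm
    simp only [List.ofFn_succ, List.prod_cons, ih]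
    rw [mul_assoc, ← mul_assoc (g 0), hg₀.eq, mul_assoc, mul_assoc]

section Diagonal

variable {G : Type*} [Group G]

-- The paper's `Δₙ` has `n + 1` factors: it is `diagonalConj j (n + 1)`.
def diagonalConj (j : G) (n : ℕ) (c : G) : G :=
  (List.ofFn fun i : Fin n => j ^ (i : ℕ) * c * (j ^ (i : ℕ))⁻¹).prod

theorem diagonalConj_mul {j : G} {H : Subgroup G}
    (hH : ∀ m : ℕ, 0 < m → ∀ a ∈ H, ∀ b ∈ H, Commute (j ^ m * a * (j ^ m)⁻¹) b)
    (n : ℕ) {a b : G} (ha : a ∈ H) (hb : b ∈ H) :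
    diagonalConj j n (a * b) = diagonalConj j n a * diagonalConj j n b := by
  unfold diagonalConj
  simp only [← conj_mul]
  refine List.prod_ofFn_mul_of_commute_s12 _ _ fun i k hki => ?_
  obtain ⟨d, hd⟩ := Nat.exists_eq_add_of_lt hki
  have hconj := (hH (d + 1) d.succ_pos a ha b hb).conj (j ^ (k : ℕ))
  rwa [hd, add_assoc, pow_add, mul_inv_rev, ← mul_assoc, mul_assoc _ _ a,
    mul_assoc _ _ (j ^ (d + 1))⁻¹]

def diagonalConjHom (j : G) (n : ℕ) (H : Subgroup G)
    (hH : ∀ m : ℕ, 0 < m → ∀ a ∈ H, ∀ b ∈ H, Commute (j ^ m * a * (j ^ m)⁻¹) b) : H →* G :=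
  MonoidHom.mk' (fun c => diagonalConj j n c) fun a b => diagonalConj_mul hH n a.2 b.2

end Diagonal

namespace Equiv.Perm

variable {α : Type*}

theorem mem_fixingSubgroup_compl_iff {S : Set α} {c : Perm α} :
    c ∈ fixingSubgroup (Perm α) Sᶜ ↔ ∀ x, c x ≠ x → x ∈ S := by
  simp only [mem_fixingSubgroup_iff, Set.mem_compl_iff]
  exact forall_congr' fun x => not_imp_comm

theorem disjoint_conj_of_mem_fixingSubgroup_compl {j : Perm α} {S : Set α}
    (hj : ∀ n : ℤ, n ≠ 0 → ∀ x ∈ S, (j ^ n) x ∉ S) {m : ℤ} (hm : m ≠ 0) {a b : Perm α}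
    (ha : a ∈ fixingSubgroup (Perm α) Sᶜ) (hb : b ∈ fixingSubgroup (Perm α) Sᶜ) :
    Disjoint (j ^ m * a * (j ^ m)⁻¹) b := by
  rw [mem_fixingSubgroup_compl_iff] at ha hb
  intro x
  by_cases hx : x ∈ S
  · have hxm : (j ^ m)⁻¹ x ∉ S := by simpa [zpow_neg] using hj (-m) (neg_ne_zero.mpr hm) x hx
    have hfix : a ((j ^ m)⁻¹ x) = (j ^ m)⁻¹ x := by_contra fun h => hxm (ha _ h)
    left
    show (j ^ m) (a ((j ^ m)⁻¹ x)) = x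
    rw [hfix]
    exact (j ^ m).apply_symm_apply x
  · exact .inr (by_contra fun h => hx (hb x h))

end Equiv.Perm

/-- The diagonal map $\Delta_n(c) = \prod_{i=0}^n j^i c j^{-i}$ is multiplicative on
elements supported in a set $S$ displaced off itself by all nonzero powers of $j$,
and hence sends commutators to commutators. -/
theorem diagonal_map_multiplicative {α : Type*}
    (j : Equiv.Perm α) (S : Set α)
    (hj : ∀ n : ℤ, n ≠ 0 → ∀ x ∈ S, (j ^ n) x ∉ S)
    (n : ℕ) (a b : Equiv.Perm α)
    (ha : ∀ x, a x ≠ x → x ∈ S) (hb : ∀ x, b x ≠ x → x ∈ S) :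
    (List.ofFn fun i : Fin (n + 1) => j ^ (i : ℕ) * (a * b) * (j ^ (i : ℕ))⁻¹).prod =
      (List.ofFn fun i : Fin (n + 1) => j ^ (i : ℕ) * a * (j ^ (i : ℕ))⁻¹).prod *
        (List.ofFn fun i : Fin (n + 1) => j ^ (i : ℕ) * b * (j ^ (i : ℕ))⁻¹).prod ∧
    (List.ofFn fun i : Fin (n + 1) => j ^ (i : ℕ) * ⁅a, b⁆ * (j ^ (i : ℕ))⁻¹).prod =
      ⁅(List.ofFn fun i : Fin (n + 1) => j ^ (i : ℕ) * a * (j ^ (i : ℕ))⁻¹).prod,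
        (List.ofFn fun i : Fin (n + 1) => j ^ (i : ℕ) * b * (j ^ (i : ℕ))⁻¹).prod⁆ := by
  have hsupp (c : Equiv.Perm α) (hc : ∀ x, c x ≠ x → x ∈ S) :
      c ∈ fixingSubgroup (Equiv.Perm α) Sᶜ :=
    Equiv.Perm.mem_fixingSubgroup_compl_iff.mpr hc
  have hcomm : ∀ m : ℕ, 0 < m → ∀ c ∈ fixingSubgroup (Equiv.Perm α) Sᶜ,
      ∀ d ∈ fixingSubgroup (Equiv.Perm α) Sᶜ, Commute (j ^ m * c * (j ^ m)⁻¹) d := by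
    intro m hm c hc d hd
    have hdisj := Equiv.Perm.disjoint_conj_of_mem_fixingSubgroup_compl hj (m := m) (by omega) hc hd
    rw [zpow_natCast] at hdisj
    exact hdisj.commute
  let Δ := diagonalConjHom j (n + 1) _ hcomm
  let a' : fixingSubgroup (Equiv.Perm α) Sᶜ := ⟨a, hsupp a ha⟩
  let b' : fixingSubgroup (Equiv.Perm α) Sᶜ := ⟨b, hsupp b hb⟩
  refine ⟨map_mul Δ a' b', ?_⟩
  have h := map_commutatorElement Δ a' b'
  rwa [commutatorElement_def, commutatorElement_def] at h ⊢
end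

section
/- Let H be a group of increasing bijections of [0,1]. Let I₁ = [p₁,q₁], …, Iₙ = [pₙ,qₙ] be pairwise disjoint nondegenerate closed subintervals of [0,1] such that every element of H fixes each pᵢ and each qᵢ. For each i let Jᵢ be a nonempty closed interval contained in the open interval (pᵢ, qᵢ), and suppose that for each i there exists jᵢ ∈ H with jᵢ(Jᵢ) ∩ Jᵢ = ∅. Then there exists a single element j ∈ H such that j(Jᵢ) ∩ Jᵢ = ∅ for all i = 1, …, n simultaneously. -/
open Filter
open scoped commutatorElement

/-!
An element of `H` without fixed points on a closed interval `J` has a power displacing `J`: the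
orbit of an endpoint is monotone and converges to a fixed point, which lies outside `J`. So it
suffices to find one `h ∈ H` without fixed points on all the `Jᵢ`, which goes by induction.
Given `a` without fixed points on `J₁, …, Jₖ`, a power `A` of `a` displaces them, and some `b ∈ H`
pushes `Jₖ₊₁` off to the right. For `u, v ∈ {A, A⁻¹}` the interval `uᵐ Jᵢ` shrinks to a fixed
point of `u` from one side, so `b uᵐ Jᵢ` and `vⁿ Jᵢ` shrink to points from one side, and are
disjoint for `m` large and then `n` large; then `(vⁿ)⁻¹ b uᵐ` has no fixed point on `Jᵢ`.
-/

open Set Function Equiv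

variable {α ι : Type*}

theorem disjoint_perm_inv_image {f : Perm α} {s : Set α} (h : Disjoint (f '' s) s) :
    Disjoint (⇑f⁻¹ '' s) s := by
  have := (disjoint_image_iff f⁻¹.injective).2 h.symm
  simpa [image_image] using this

theorem disjoint_fixedPoints_perm_inv_mul {s : Set α} {g w : Perm α}
    (h : ∀ x ∈ s, g x ≠ w x) : Disjoint s (fixedPoints ⇑(w⁻¹ * g)) := by
  refine disjoint_left.2 fun x hx hfix => h x hx ?_
  rwa [mem_fixedPoints, IsFixedPt, Perm.mul_apply, Perm.inv_eq_iff_eq] at hfix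

section Preorder

variable [Preorder α] {f : Perm α} {c : α}

theorem Monotone.monotone_perm_pow_apply (hf : Monotone f) (hc : c ≤ f c) :
    Monotone fun n : ℕ => (f ^ n) c := by
  simpa only [Perm.coe_pow] using hf.monotone_iterate_of_le_map hc

theorem Monotone.antitone_perm_pow_apply (hf : Monotone f) (hc : f c ≤ c) :
    Antitone fun n : ℕ => (f ^ n) c := by
  simpa only [Perm.coe_pow] using hf.antitone_iterate_of_map_le hc

end Preorder

section LinearOrder

variable [LinearOrder α]

namespace StrictMono

variable {f : Perm α} {x y : α}

theorem perm_inv (hf : StrictMono f) : StrictMono ⇑f⁻¹ :=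
  fun x y h => hf.lt_iff_lt.1 (by simpa using h)

theorem perm_pow (hf : StrictMono f) (n : ℕ) : StrictMono ⇑(f ^ n) := by
  rw [Perm.coe_pow]
  exact hf.iterate n

theorem lt_perm_inv_apply_iff (hf : StrictMono f) : x < f⁻¹ y ↔ f x < y := by
  rw [← hf.lt_iff_lt]
  simp

theorem perm_inv_apply_lt_iff (hf : StrictMono f) : f⁻¹ x < y ↔ x < f y := by
  rw [← hf.lt_iff_lt]
  simp

theorem le_perm_inv_apply_iff (hf : StrictMono f) : x ≤ f⁻¹ y ↔ f x ≤ y := by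
  rw [← hf.le_iff_le]
  simp

theorem perm_inv_apply_le_iff (hf : StrictMono f) : f⁻¹ x ≤ y ↔ x ≤ f y := by
  rw [← hf.le_iff_le]
  simp

theorem perm_image_Icc (hf : StrictMono f) (c d : α) : f '' Icc c d = Icc (f c) (f d) :=
  (hf.orderIsoOfSurjective f f.surjective).image_Icc c d

end StrictMono

theorem Set.Icc_disjoint_Icc_of_lt {a b c d : α} (h : b < c) : Disjoint (Icc a b) (Icc c d) :=
  disjoint_left.2 fun _ hx hx' => (hx.2.trans_lt h).not_ge hx'.1

def IccShrinksOneSided (a b : ℕ → α) (p : α) : Prop :=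
  ((∀ m, b m < p) ∧ ∀ z < p, ∀ᶠ m in atTop, z < a m) ∨
    ((∀ m, p < a m) ∧ ∀ z, p < z → ∀ᶠ m in atTop, b m < z)

namespace IccShrinksOneSided

variable {a b a' b' : ℕ → α} {p q : α}

theorem eventually_disjoint (h : IccShrinksOneSided a b p) {s t : α} (hp : p ∉ Icc s t) :
    ∀ᶠ m in atTop, Disjoint (Icc s t) (Icc (a m) (b m)) := by
  have hst : p < s ∨ t < p := by simpa only [mem_Icc, not_and_or, not_le] using hp
  rcases h with ⟨hb, ha⟩ | ⟨ha, hb⟩ <;> rcases hst with hs | ht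
  · exact .of_forall fun m => (Icc_disjoint_Icc_of_lt ((hb m).trans hs)).symm
  · exact (ha t ht).mono fun m hm => Icc_disjoint_Icc_of_lt hm
  · exact (hb s hs).mono fun m hm => (Icc_disjoint_Icc_of_lt hm).symm
  · exact .of_forall fun m => Icc_disjoint_Icc_of_lt (ht.trans (ha m))

theorem eventually_notMem (h : IccShrinksOneSided a b p) (q : α) :
    ∀ᶠ m in atTop, q ∉ Icc (a m) (b m) := by
  rcases h with ⟨hb, ha⟩ | ⟨ha, hb⟩
  · rcases lt_or_ge q p with hq | hq
    · exact (ha q hq).mono fun m hm hqm => hm.not_ge hqm.1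
    · exact .of_forall fun m hqm => (hb m).not_ge (hq.trans hqm.2)
  · rcases le_or_gt q p with hq | hq
    · exact .of_forall fun m hqm => (hq.trans_lt (ha m)).not_ge hqm.1
    · exact (hb q hq).mono fun m hm hqm => hm.not_ge hqm.2

/-- The order of the quantifiers matters when `p = q` and both families approach from the same
side. -/
theorem eventually_eventually_disjoint (hS : IccShrinksOneSided a b p)
    (hT : IccShrinksOneSided a' b' q) :
    ∀ᶠ m in atTop, ∀ᶠ M in atTop, Disjoint (Icc (a m) (b m)) (Icc (a' M) (b' M)) :=
  (hS.eventually_notMem q).mono fun _ hm => hT.eventually_disjoint hm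

theorem map_perm {g : Perm α} (h : IccShrinksOneSided a b p) (hg : StrictMono g) :
    IccShrinksOneSided (fun m => g (a m)) (fun m => g (b m)) (g p) := by
  rcases h with ⟨hb, ha⟩ | ⟨ha, hb⟩
  · exact .inl ⟨fun m => hg (hb m), fun z hz =>
      (ha _ (hg.perm_inv_apply_lt_iff.2 hz)).mono fun _ hm => hg.perm_inv_apply_lt_iff.1 hm⟩
  · exact .inr ⟨fun m => hg (ha m), fun z hz =>
      (hb _ (hg.lt_perm_inv_apply_iff.2 hz)).mono fun _ hm => hg.lt_perm_inv_apply_iff.1 hm⟩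

end IccShrinksOneSided

theorem StrictMono.disjoint_perm_image_Icc_iff {f : Perm α} (hf : StrictMono f) {c d : α}
    (hcd : c ≤ d) : Disjoint (f '' Icc c d) (Icc c d) ↔ d < f c ∨ f d < c := by
  rw [hf.perm_image_Icc]
  constructor
  · intro h
    by_contra! hfc
    exact h.notMem_of_mem_left ⟨le_max_right _ _, max_le hfc.2 (hf.monotone hcd)⟩
      ⟨le_max_left _ _, max_le hcd hfc.1⟩
  · rintro (h | h)
    · exact (Icc_disjoint_Icc_of_lt h).symm
    · exact Icc_disjoint_Icc_of_lt h

end LinearOrder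

section CompleteLinearOrder

variable [CompleteLinearOrder α] {f : Perm α} {c d : α}

theorem Monotone.eventually_lt_perm_pow_apply (hf : Monotone f) (hc : c ≤ f c) {z : α}
    (hz : z < ⨆ n : ℕ, (f ^ n) c) : ∀ᶠ n in atTop, z < (f ^ n) c := by
  obtain ⟨n₀, hn₀⟩ := lt_iSup_iff.1 hz
  exact eventually_atTop.2 ⟨n₀, fun n hn => hn₀.trans_le (hf.monotone_perm_pow_apply hc hn)⟩

theorem Monotone.eventually_perm_pow_apply_lt (hf : Monotone f) (hc : f c ≤ c) {z : α}
    (hz : ⨅ n : ℕ, (f ^ n) c < z) : ∀ᶠ n in atTop, (f ^ n) c < z := by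
  obtain ⟨n₀, hn₀⟩ := iInf_lt_iff.1 hz
  exact eventually_atTop.2 ⟨n₀, fun n hn => (hf.antitone_perm_pow_apply hc hn).trans_lt hn₀⟩

theorem StrictMono.isFixedPt_iSup_perm_pow_apply (hf : StrictMono f) (hc : c ≤ f c) :
    IsFixedPt f (⨆ n : ℕ, (f ^ n) c) := by
  have hsup : f (⨆ n : ℕ, (f ^ n) c) = ⨆ n : ℕ, f ((f ^ n) c) :=
    (hf.orderIsoOfSurjective f f.surjective).map_iSup _
  refine le_antisymm ?_ (iSup_le fun n => ?_)
  · rw [hsup]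
    exact iSup_le fun n => le_iSup_of_le (f := fun n : ℕ => (f ^ n) c) (n + 1)
      (by rw [pow_succ', Perm.mul_apply])
  · cases n with
    | zero => exact hc.trans (hf.monotone (le_iSup_of_le 0 (by simp)))
    | succ n =>
      rw [pow_succ', Perm.mul_apply]
      exact hf.monotone (le_iSup (fun n : ℕ => (f ^ n) c) n)

theorem StrictMono.exists_iccShrinksOneSided_perm_pow (hf : StrictMono f) (hcd : c ≤ d)
    (h : Disjoint (f '' Icc c d) (Icc c d)) :
    ∃ p, IccShrinksOneSided (fun n => (f ^ n) c) (fun n => (f ^ n) d) p := by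
  rcases (hf.disjoint_perm_image_Icc_iff hcd).1 h with hup | hdown
  · refine ⟨⨆ n : ℕ, (f ^ n) c, .inl ⟨fun n => ?_, fun z hz =>
      hf.monotone.eventually_lt_perm_pow_apply (hcd.trans hup.le) hz⟩⟩
    calc (f ^ n) d < (f ^ n) (f c) := hf.perm_pow n hup
      _ = (f ^ (n + 1)) c := by rw [pow_succ, Perm.mul_apply]
      _ ≤ ⨆ n : ℕ, (f ^ n) c := le_iSup (fun n : ℕ => (f ^ n) c) (n + 1)
  · refine ⟨⨅ n : ℕ, (f ^ n) d, .inr ⟨fun n => ?_, fun z hz =>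
      hf.monotone.eventually_perm_pow_apply_lt (hdown.le.trans hcd) hz⟩⟩
    calc ⨅ n : ℕ, (f ^ n) d ≤ (f ^ (n + 1)) d := iInf_le (fun n : ℕ => (f ^ n) d) (n + 1)
      _ = (f ^ n) (f d) := by rw [pow_succ, Perm.mul_apply]
      _ < (f ^ n) c := hf.perm_pow n hdown

theorem StrictMono.eventually_lt_perm_pow_apply (hf : StrictMono f) (hc : c < f c)
    (hfix : Disjoint (Icc c d) (fixedPoints f)) : ∀ᶠ n in atTop, d < (f ^ n) c := by
  have hcP : c ≤ ⨆ n : ℕ, (f ^ n) c := le_iSup_of_le 0 (by simp)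
  have hdP : d < ⨆ n : ℕ, (f ^ n) c := by
    by_contra! h
    exact hfix.notMem_of_mem_right (hf.isFixedPt_iSup_perm_pow_apply hc.le) ⟨hcP, h⟩
  exact hf.monotone.eventually_lt_perm_pow_apply hc.le hdP

theorem StrictMono.eventually_disjoint_perm_pow_image (hf : StrictMono f) (hcd : c ≤ d)
    (hfix : Disjoint (Icc c d) (fixedPoints f)) :
    ∀ᶠ n : ℕ in atTop, Disjoint ((f ^ n) '' Icc c d) (Icc c d) := by
  rcases lt_trichotomy c (f c) with hc | hc | hc
  · filter_upwards [hf.eventually_lt_perm_pow_apply hc hfix] with n hn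
    exact ((hf.perm_pow n).disjoint_perm_image_Icc_iff hcd).2 (.inl hn)
  · exact absurd hc.symm (hfix.notMem_of_mem_left ⟨le_rfl, hcd⟩)
  · have hfix' : Disjoint (Icc c d) (fixedPoints ⇑f⁻¹) :=
      hfix.mono_right fun x (hx : IsFixedPt _ x) => by simpa using hx.perm_inv
    filter_upwards [hf.perm_inv.eventually_lt_perm_pow_apply (hf.lt_perm_inv_apply_iff.2 hc)
      hfix'] with n hn
    rw [inv_pow, (hf.perm_pow n).lt_perm_inv_apply_iff] at hn
    exact ((hf.perm_pow n).disjoint_perm_image_Icc_iff hcd).2 (.inr hn)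

theorem StrictMono.exists_perm_pow_forall_disjoint_image (hf : StrictMono f) (s : Finset ι)
    {c d : ι → α} (hcd : ∀ i ∈ s, c i ≤ d i)
    (hfix : ∀ i ∈ s, Disjoint (Icc (c i) (d i)) (fixedPoints f)) :
    ∃ n : ℕ, ∀ i ∈ s, Disjoint ((f ^ n) '' Icc (c i) (d i)) (Icc (c i) (d i)) :=
  ((eventually_all_finset s).2 fun i hi =>
    hf.eventually_disjoint_perm_pow_image (hcd i hi) (hfix i hi)).exists

theorem eventually_eventually_forall_perm_pow_apply_ne {u v g : Perm α} (hu : StrictMono u)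
    (hv : StrictMono v) (hg : StrictMono g) (hcd : c ≤ d)
    (hud : Disjoint (u '' Icc c d) (Icc c d)) (hvd : Disjoint (v '' Icc c d) (Icc c d)) :
    ∀ᶠ m in atTop, ∀ᶠ n in atTop, ∀ x ∈ Icc c d, g ((u ^ m) x) ≠ (v ^ n) x := by
  obtain ⟨p, hp⟩ := hu.exists_iccShrinksOneSided_perm_pow hcd hud
  obtain ⟨q, hq⟩ := hv.exists_iccShrinksOneSided_perm_pow hcd hvd
  filter_upwards [(hp.map_perm hg).eventually_eventually_disjoint hq] with m hm
  filter_upwards [hm] with n hn x hx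
  exact hn.ne_of_mem
    ⟨hg.monotone ((hu.perm_pow m).monotone hx.1), hg.monotone ((hu.perm_pow m).monotone hx.2)⟩
    ⟨(hv.perm_pow n).monotone hx.1, (hv.perm_pow n).monotone hx.2⟩

end CompleteLinearOrder

namespace Subgroup

variable [CompleteLinearOrder α] (H : Subgroup (Perm α))

theorem exists_mem_lt_apply (hH : ∀ h ∈ H, StrictMono h) {c d : α} (hcd : c ≤ d)
    (hdispl : ∃ g ∈ H, Disjoint (g '' Icc c d) (Icc c d)) : ∃ b ∈ H, d < b c := by
  obtain ⟨g, hg, hdisj⟩ := hdispl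
  rcases ((hH g hg).disjoint_perm_image_Icc_iff hcd).1 hdisj with h | h
  · exact ⟨g, hg, h⟩
  · exact ⟨g⁻¹, H.inv_mem hg, (hH g hg).lt_perm_inv_apply_iff.2 h⟩

/-- With `u, v ∈ H` displacing the old intervals, `u` moving `c₀` up and `v` moving `d₀` down,
`(vⁿ)⁻¹ * (b * uᵐ)` has no fixed point on `[c₀, d₀]` since `b` pushes it off to the right, nor,
for suitable `m` and `n`, on the old intervals. -/
theorem exists_mem_disjoint_fixedPoints_and_forall (hH : ∀ h ∈ H, StrictMono h)
    {s : Finset ι} {c d : ι → α} (hcd : ∀ i ∈ s, c i ≤ d i) {a b : Perm α} (ha : a ∈ H)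
    (hfix : ∀ i ∈ s, Disjoint (Icc (c i) (d i)) (fixedPoints a)) (hb : b ∈ H) {c₀ d₀ : α}
    (hb₀ : d₀ < b c₀) :
    ∃ h ∈ H, Disjoint (Icc c₀ d₀) (fixedPoints h) ∧
      ∀ i ∈ s, Disjoint (Icc (c i) (d i)) (fixedPoints h) := by
  obtain ⟨N, hN⟩ := (hH a ha).exists_perm_pow_forall_disjoint_image s hcd hfix
  have hA : a ^ N ∈ H := H.pow_mem ha N
  have hA' : ∀ i ∈ s, Disjoint (⇑(a ^ N)⁻¹ '' Icc (c i) (d i)) (Icc (c i) (d i)) :=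
    fun i hi => disjoint_perm_inv_image (hN i hi)
  obtain ⟨u, hu, hu₀, hus⟩ : ∃ u ∈ H, c₀ ≤ u c₀ ∧
      ∀ i ∈ s, Disjoint (u '' Icc (c i) (d i)) (Icc (c i) (d i)) := by
    rcases le_total c₀ ((a ^ N) c₀) with h | h
    · exact ⟨_, hA, h, hN⟩
    · exact ⟨_, H.inv_mem hA, (hH _ hA).le_perm_inv_apply_iff.2 h, hA'⟩
  obtain ⟨v, hv, hv₀, hvs⟩ : ∃ v ∈ H, v d₀ ≤ d₀ ∧
      ∀ i ∈ s, Disjoint (v '' Icc (c i) (d i)) (Icc (c i) (d i)) := by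
    rcases le_total ((a ^ N) d₀) d₀ with h | h
    · exact ⟨_, hA, h, hN⟩
    · exact ⟨_, H.inv_mem hA, (hH _ hA).perm_inv_apply_le_iff.2 h, hA'⟩
  obtain ⟨m, hm⟩ := ((eventually_all_finset s).2 fun i hi =>
    eventually_eventually_forall_perm_pow_apply_ne (hH u hu) (hH v hv) (hH b hb) (hcd i hi)
      (hus i hi) (hvs i hi)).exists
  obtain ⟨n, hn⟩ := ((eventually_all_finset s).2 hm).exists
  refine ⟨(v ^ n)⁻¹ * (b * u ^ m), H.mul_mem (H.inv_mem (H.pow_mem hv n))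
    (H.mul_mem hb (H.pow_mem hu m)), disjoint_fixedPoints_perm_inv_mul fun x hx => ne_of_gt ?_,
    fun i hi => disjoint_fixedPoints_perm_inv_mul (hn i hi)⟩
  calc (v ^ n) x ≤ (v ^ n) d₀ := (hH _ (H.pow_mem hv n)).monotone hx.2
    _ ≤ d₀ := (hH v hv).monotone.antitone_perm_pow_apply hv₀ (Nat.zero_le n)
    _ < b c₀ := hb₀
    _ ≤ b ((u ^ m) c₀) :=
      (hH b hb).monotone ((hH u hu).monotone.monotone_perm_pow_apply hu₀ (Nat.zero_le m))
    _ ≤ b ((u ^ m) x) := (hH b hb).monotone ((hH _ (H.pow_mem hu m)).monotone hx.1)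

theorem exists_mem_forall_disjoint_fixedPoints (hH : ∀ h ∈ H, StrictMono h) (s : Finset ι)
    {c d : ι → α} (hcd : ∀ i ∈ s, c i ≤ d i)
    (hdispl : ∀ i ∈ s, ∃ g ∈ H, Disjoint (g '' Icc (c i) (d i)) (Icc (c i) (d i))) :
    ∃ h ∈ H, ∀ i ∈ s, Disjoint (Icc (c i) (d i)) (fixedPoints h) := by
  classical
  induction s using Finset.induction_on with
  | empty => exact ⟨1, H.one_mem, by simp⟩
  | insert j s _ ih =>
    rw [Finset.forall_mem_insert] at hcd hdispl
    obtain ⟨a, ha, hfix⟩ := ih hcd.2 hdispl.2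
    obtain ⟨b, hb, hbj⟩ := H.exists_mem_lt_apply hH hcd.1 hdispl.1
    obtain ⟨h, hh, hj, hs⟩ := H.exists_mem_disjoint_fixedPoints_and_forall hH hcd.2 ha hfix hb hbj
    exact ⟨h, hh, Finset.forall_mem_insert _ _ _ |>.2 ⟨hj, hs⟩⟩

theorem exists_mem_forall_disjoint_image (hH : ∀ h ∈ H, StrictMono h) (s : Finset ι)
    {c d : ι → α} (hcd : ∀ i ∈ s, c i ≤ d i)
    (hdispl : ∀ i ∈ s, ∃ g ∈ H, Disjoint (g '' Icc (c i) (d i)) (Icc (c i) (d i))) :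
    ∃ g ∈ H, ∀ i ∈ s, Disjoint (g '' Icc (c i) (d i)) (Icc (c i) (d i)) := by
  obtain ⟨h, hh, hfix⟩ := H.exists_mem_forall_disjoint_fixedPoints hH s hcd hdispl
  obtain ⟨N, hN⟩ := (hH h hh).exists_perm_pow_forall_disjoint_image s hcd hfix
  exact ⟨h ^ N, H.pow_mem hh N, hN⟩

end Subgroup

theorem simultaneous_displacement_general
    (H : Subgroup (Equiv.Perm unitInterval))
    (hH : ∀ h ∈ H, StrictMono (h : unitInterval → unitInterval))
    (n : ℕ) (p q : Fin n → unitInterval)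
    (c d : Fin n → unitInterval)
    (hJ : ∀ i, p i < c i ∧ c i ≤ d i ∧ d i < q i)
    (hdispl : ∀ i, ∃ jᵢ ∈ H, Disjoint ((jᵢ : unitInterval → unitInterval) '' Set.Icc (c i) (d i)) (Set.Icc (c i) (d i))) :
    ∃ j ∈ H, ∀ i, Disjoint ((j : unitInterval → unitInterval) '' Set.Icc (c i) (d i)) (Set.Icc (c i) (d i)) := by
  obtain ⟨j, hj, hdisj⟩ := H.exists_mem_forall_disjoint_image hH Finset.univ
    (fun i _ => (hJ i).2.1) (fun i _ => hdispl i)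
  exact ⟨j, hj, fun i => hdisj i (Finset.mem_univ i)⟩

/-- Simultaneous displacement: if $H$ is a group of increasing bijections of $[0,1]$
preserving each of finitely many pairwise disjoint closed intervals
$I_i = [p_i,q_i]$, and each closed interval $J_i \subset (p_i,q_i)$ can be displaced
off itself by some element of $H$, then a single element of $H$ displaces all the
$J_i$ off themselves simultaneously. -/
theorem simultaneous_displacement
    (H : Subgroup (Equiv.Perm unitInterval))
    (hH : ∀ h ∈ H, StrictMono (h : unitInterval → unitInterval))
    (n : ℕ) (p q : Fin n → unitInterval)
    (hpq : ∀ i, p i < q i)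
    (hdisjI : ∀ i k, i ≠ k → Disjoint (Set.Icc (p i) (q i)) (Set.Icc (p k) (q k)))
    (hfix : ∀ h ∈ H, ∀ i, h (p i) = p i ∧ h (q i) = q i)
    (c d : Fin n → unitInterval)
    (hJ : ∀ i, p i < c i ∧ c i ≤ d i ∧ d i < q i)
    (hdispl : ∀ i, ∃ jᵢ ∈ H, Disjoint ((jᵢ : unitInterval → unitInterval) '' Set.Icc (c i) (d i)) (Set.Icc (c i) (d i))) :
    ∃ j ∈ H, ∀ i, Disjoint ((j : unitInterval → unitInterval) '' Set.Icc (c i) (d i)) (Set.Icc (c i) (d i)) :=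
  simultaneous_displacement_general H hH n p q c d hJ hdispl
end

section
/- Let α be a linearly ordered set, let f : α → α be an order-preserving bijection, and let J ⊆ α be a nonempty order-convex set (if x, z ∈ J and x ≤ y ≤ z then y ∈ J). If f(J) ∩ J = ∅, then fⁿ(J) ∩ J = ∅ for every integer n ≠ 0. -/
open Filter
open scoped commutatorElement

/-! Since `f` is an order automorphism, `J` and `f '' J` are disjoint order-convex sets, so one
lies entirely below the other; replacing `f` by `f⁻¹` if necessary, `J` lies below `f '' J`.
Then `x < f x` on `J`, so `f^[n] x ≥ f x` stays above `J` for every `n ≥ 1`, and negative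
powers reduce to positive ones because `fⁿ '' J` meets `J` iff `J` meets `f⁻ⁿ '' J`. -/

open Set

section

variable {α : Type*}

theorem Set.OrdConnected.forall_lt_of_disjoint [LinearOrder α] {s t : Set α}
    (hs : s.OrdConnected) (ht : t.OrdConnected) (hst : Disjoint s t) {a b : α}
    (ha : a ∈ s) (hb : b ∈ t) (hab : a < b) : ∀ a' ∈ s, ∀ b' ∈ t, a' < b' := by
  intro a' ha' b' hb'
  by_contra! hba
  rcases le_or_gt b' a with hb'a | hab'
  · exact disjoint_left.mp hst ha (ht.out hb' hb ⟨hb'a, hab.le⟩)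
  · exact disjoint_left.mp hst (hs.out ha ha' ⟨hab'.le, hba⟩) hb'

theorem lt_iterate_of_forall_lt [Preorder α] {f : α → α} (hf : StrictMono f) {s : Set α}
    (h : ∀ x ∈ s, ∀ y ∈ s, y < f x) {x y : α} (hx : x ∈ s) (hy : y ∈ s) {n : ℕ}
    (hn : 0 < n) : y < f^[n] x := by
  induction n, hn using Nat.le_induction with
  | base => exact h x hx y hy
  | succ n _ ih =>
    calc y < f^[n] x := ih
      _ < f^[n] (f x) := hf.iterate n (h x hx x hx)
      _ = f^[n + 1] x := (Function.iterate_succ_apply f n x).symm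

theorem disjoint_iterate_image_of_forall_lt [Preorder α] {f : α → α} (hf : StrictMono f)
    {s : Set α} (h : ∀ x ∈ s, ∀ y ∈ s, y < f x) {n : ℕ} (hn : 0 < n) :
    Disjoint (f^[n] '' s) s := by
  rw [disjoint_left]
  rintro _ ⟨x, hx, rfl⟩ hmem
  exact lt_irrefl _ (lt_iterate_of_forall_lt hf h hx hmem hn)

theorem Equiv.Perm.strictMono_inv [LinearOrder α] {f : Perm α} (hf : StrictMono f) :
    StrictMono ⇑f⁻¹ :=
  fun a b hab => hf.lt_iff_lt.mp (show f (f⁻¹ a) < f (f⁻¹ b) by simpa using hab)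

theorem disjoint_perm_inv_image_iff (e : Equiv.Perm α) (s : Set α) :
    Disjoint (⇑e⁻¹ '' s) s ↔ Disjoint (⇑e '' s) s := by
  rw [← disjoint_image_iff e.injective, disjoint_comm]
  simp [← image_comp]

theorem disjoint_perm_zpow_image_of_lt [LinearOrder α] {f : Equiv.Perm α} (hf : StrictMono f)
    {s : Set α} (hs : s.OrdConnected) (hdisj : Disjoint (⇑f '' s) s) {j : α} (hj : j ∈ s)
    (hjf : j < f j) (n : ℤ) (hn : n ≠ 0) : Disjoint (⇑(f ^ n) '' s) s := by
  have hfs : (⇑f '' s).OrdConnected := by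
    rw [f.image_eq_preimage_symm, ← Equiv.Perm.inv_def]
    exact hs.preimage_mono (Equiv.Perm.strictMono_inv hf).monotone
  have hbelow := hs.forall_lt_of_disjoint hfs hdisj.symm hj (mem_image_of_mem f hj) hjf
  have hpos : ∀ m : ℕ, 0 < m → Disjoint (⇑(f ^ m) '' s) s := fun m hm => by
    rw [Equiv.Perm.coe_pow]
    exact disjoint_iterate_image_of_forall_lt hf
      (fun x hx y hy => hbelow y hy (f x) (mem_image_of_mem f hx)) hm
  obtain ⟨m, rfl | rfl⟩ := Int.eq_nat_or_neg n
  · rw [zpow_natCast]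
    exact hpos m (by omega)
  · rw [zpow_neg, zpow_natCast, disjoint_perm_inv_image_iff]
    exact hpos m (by omega)

end

/-- If an order-preserving bijection displaces a nonempty order-convex set off itself,
then so does every nonzero power. -/
theorem zpow_displaces_of_displaces {α : Type*} [LinearOrder α]
    (f : Equiv.Perm α) (hf : StrictMono (f : α → α))
    (J : Set α) (hne : J.Nonempty)
    (hconv : ∀ x ∈ J, ∀ z ∈ J, ∀ y, x ≤ y → y ≤ z → y ∈ J)
    (hdisj : Disjoint ((f : α → α) '' J) J) :
    ∀ n : ℤ, n ≠ 0 → Disjoint (((f ^ n : Equiv.Perm α) : α → α) '' J) J := by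
  obtain ⟨j, hj⟩ := hne
  have hJ : J.OrdConnected := ⟨fun x hx z hz y hy => hconv x hx z hz y hy.1 hy.2⟩
  rcases lt_trichotomy j (f j) with hlt | heq | hgt
  · exact disjoint_perm_zpow_image_of_lt hf hJ hdisj hj hlt
  · exact (disjoint_left.mp hdisj (mem_image_of_mem f hj) (heq ▸ hj)).elim
  · intro n hn
    have hinv := disjoint_perm_zpow_image_of_lt (Equiv.Perm.strictMono_inv hf) hJ
      ((disjoint_perm_inv_image_iff f J).mpr hdisj) hj (hf.lt_iff_lt.mp (by simpa using hgt))
      (-n) (neg_ne_zero.mpr hn)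
    rwa [inv_zpow', neg_neg] at hinv
end
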